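/- arXiv:quant-ph/0703063 — 10 statements merged into one kernel-verified Lean document; each statement's English description precedes it below -/
import Mathlib

section
/- Let ħ > 0 and let ψ : ℝ → ℂ be a Schwartz function. Then (∫_ℝ x²|ψ(x)|² dx)^{1/2} · (∫_ℝ ħ²|ψ'(x)|² dx)^{1/2} ≥ (ħ/2) ∫_ℝ |ψ(x)|² dx (Weyl's form of Heisenberg's uncertainty principle). -/
open MeasureTheory

/-- The key inequality: `∫ ‖ψ‖² ≤ 2 √(∫ x²‖ψ‖²) √(∫ ‖ψ'‖²)`. -/
theorem weyl_key (ψ : SchwartzMap ℝ ℂ) :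
    (∫ x : ℝ, ‖ψ x‖ ^ 2) ≤
      2 * (Real.sqrt (∫ x : ℝ, x ^ 2 * ‖ψ x‖ ^ 2) *
        Real.sqrt (∫ x : ℝ, ‖deriv (⇑ψ) x‖ ^ 2)) := by
  -- the derivative as a Schwartz map
  set ψ' : SchwartzMap ℝ ℂ := SchwartzMap.derivCLM ℝ ℂ ψ with hψ'def
  have hψ' : ∀ x, ψ' x = deriv (⇑ψ) x := fun x => by
    simp [hψ'def, SchwartzMap.derivCLM_apply]
  have hcont' : Continuous fun x => deriv (⇑ψ) x := by
    have := ψ'.continuous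
    simpa [funext hψ'] using this
  -- bounds
  obtain ⟨C, hC⟩ := ψ.decay 0 0
  have hCb : ∀ x, ‖ψ x‖ ≤ C := fun x => by
    have := hC.2 x
    simpa [norm_iteratedFDeriv_zero] using this
  obtain ⟨C', hC'⟩ := ψ'.decay 0 0
  have hC'b : ∀ x : ℝ, ‖deriv (⇑ψ) x‖ ≤ C' := fun x => by
    have := hC'.2 x
    simpa [norm_iteratedFDeriv_zero, hψ'] using this
  have hC0 : 0 ≤ C := le_trans (norm_nonneg _) (hCb 0)
  have hC'0 : 0 ≤ C' := le_trans (norm_nonneg _) (hC'b 0)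
  -- the functions for integration by parts
  set u : ℝ → ℂ := fun x => (x : ℂ) with hu_def
  set v : ℝ → ℂ := fun x => ψ x * (starRingEnd ℂ) (ψ x) with hv_def
  set v' : ℝ → ℂ := fun x =>
    deriv (⇑ψ) x * (starRingEnd ℂ) (ψ x) + ψ x * (starRingEnd ℂ) (deriv (⇑ψ) x) with hv'_def
  have hd : ∀ x, HasDerivAt (⇑ψ) (deriv (⇑ψ) x) x := fun x =>
    (ψ.differentiable.differentiableAt).hasDerivAt
  have hu : ∀ x : ℝ, HasDerivAt u 1 x := fun x => by
    have h := Complex.ofRealCLM.hasDerivAt (x := x)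
    simp only [Complex.ofRealCLM_apply] at h
    exact h
  have hvd : ∀ x, HasDerivAt v (v' x) x := fun x =>
    (hd x).mul ((hd x).star)
  -- integrability facts
  have hint1 : Integrable (fun x : ℝ => ‖x‖ ^ 1 * ‖ψ x‖) volume :=
    ψ.integrable_pow_mul volume 1
  have hintψ : Integrable (fun x : ℝ => ψ x) volume := ψ.integrable
  have hintψ' : Integrable (fun x : ℝ => deriv (⇑ψ) x) volume := by
    have := ψ'.integrable (μ := volume)
    simpa [funext hψ'] using this
  have hmeas_uv' : AEStronglyMeasurable (u * v') volume := by
    apply Continuous.aestronglyMeasurable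
    exact (Complex.continuous_ofReal).mul
      (((hcont'.mul (Complex.continuous_conj.comp ψ.continuous))).add
        (ψ.continuous.mul (Complex.continuous_conj.comp hcont')))
  have huv' : Integrable (u * v') volume := by
    refine Integrable.mono' ((hint1.const_mul (2 * C')).const_mul 1) hmeas_uv' ?_
    filter_upwards with x
    have h1 : ‖u x * v' x‖ = ‖x‖ * ‖v' x‖ := by
      simp [hu_def, norm_mul, Complex.norm_real]
    have h2 : ‖v' x‖ ≤ 2 * (C' * ‖ψ x‖) := by
      calc ‖v' x‖ ≤ ‖deriv (⇑ψ) x * (starRingEnd ℂ) (ψ x)‖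
            + ‖ψ x * (starRingEnd ℂ) (deriv (⇑ψ) x)‖ := norm_add_le _ _
        _ = ‖deriv (⇑ψ) x‖ * ‖ψ x‖ + ‖ψ x‖ * ‖deriv (⇑ψ) x‖ := by
            simp [norm_mul]
        _ ≤ C' * ‖ψ x‖ + ‖ψ x‖ * C' :=
            add_le_add (mul_le_mul_of_nonneg_right (hC'b x) (norm_nonneg _))
              (mul_le_mul_of_nonneg_left (hC'b x) (norm_nonneg _))
        _ = 2 * (C' * ‖ψ x‖) := by ring
    calc ‖(u * v') x‖ = ‖x‖ * ‖v' x‖ := h1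
      _ ≤ ‖x‖ * (2 * (C' * ‖ψ x‖)) := by
          exact mul_le_mul_of_nonneg_left h2 (norm_nonneg _)
      _ = 1 * (2 * C' * (‖x‖ ^ 1 * ‖ψ x‖)) := by ring
  have hintv : Integrable v volume := by
    refine Integrable.mono' (hintψ.norm.const_mul C)
      (Continuous.aestronglyMeasurable
        (ψ.continuous.mul (Complex.continuous_conj.comp ψ.continuous))) ?_
    filter_upwards with x
    have : ‖v x‖ = ‖ψ x‖ * ‖ψ x‖ := by simp [hv_def, norm_mul]
    rw [this]
    exact mul_le_mul_of_nonneg_right (hCb x) (norm_nonneg _)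
  have hone : (fun _ : ℝ => (1 : ℂ)) * v = v := by
    funext x; simp [Pi.mul_apply]
  have hu'v : Integrable ((fun _ : ℝ => (1 : ℂ)) * v) volume := by
    rw [hone]; exact hintv
  have huv : Integrable (u * v) volume := by
    refine Integrable.mono' (hint1.const_mul C)
      (Continuous.aestronglyMeasurable
        ((Complex.continuous_ofReal).mul
          (ψ.continuous.mul (Complex.continuous_conj.comp ψ.continuous)))) ?_
    filter_upwards with x
    have h1 : ‖(u * v) x‖ = ‖x‖ * (‖ψ x‖ * ‖ψ x‖) := by
      simp [hu_def, hv_def, norm_mul, Complex.norm_real]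
    rw [h1]
    calc ‖x‖ * (‖ψ x‖ * ‖ψ x‖) ≤ ‖x‖ * (C * ‖ψ x‖) := by
          apply mul_le_mul_of_nonneg_left _ (norm_nonneg _)
          exact mul_le_mul_of_nonneg_right (hCb x) (norm_nonneg _)
      _ = C * (‖x‖ ^ 1 * ‖ψ x‖) := by ring
  -- integration by parts
  have hparts : ∫ x : ℝ, u x * v' x = - ∫ x : ℝ, (1 : ℂ) * v x :=
    integral_mul_deriv_eq_deriv_mul_of_integrable (fun x _ => hu x) (fun x _ => hvd x) huv' hu'v huv
  -- compute ∫ v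
  have hv_eq : ∀ x, v x = ((‖ψ x‖ ^ 2 : ℝ) : ℂ) := fun x => by
    rw [hv_def]
    simp only [Complex.mul_conj]
    norm_cast
    rw [Complex.normSq_eq_norm_sq]
  have hintv_val : ∫ x : ℝ, (1 : ℂ) * v x = ((∫ x : ℝ, ‖ψ x‖ ^ 2 : ℝ) : ℂ) := by
    simp only [one_mul]
    rw [show (fun x : ℝ => v x) = fun x : ℝ => ((‖ψ x‖ ^ 2 : ℝ) : ℂ) from funext hv_eq]
    exact integral_ofReal
  -- take real parts
  have huv'' : Integrable (fun x : ℝ => u x * v' x) volume := huv'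
  have hre1 : ∫ x : ℝ, (u x * v' x).re = (∫ x : ℝ, u x * v' x).re := by
    have := integral_re (μ := volume) huv''
    simpa [RCLike.re_to_complex] using this
  have hre : (∫ x : ℝ, ‖ψ x‖ ^ 2) = - ∫ x : ℝ, (u x * v' x).re := by
    have h := congrArg Complex.re hparts
    rw [hintv_val] at h
    simp only [Complex.neg_re, Complex.ofReal_re] at h
    rw [hre1]
    linarith
  -- bound the real part integral
  have hintre : Integrable (fun x : ℝ => (u x * v' x).re) volume := by
    have := huv''.re
    simpa [RCLike.re_to_complex] using this
  have hbound2 : Integrable (fun x : ℝ => 2 * ((|x| * ‖ψ x‖) * ‖deriv (⇑ψ) x‖)) volume := by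
    refine Integrable.mono' ((hint1.const_mul (2 * C')) ) ?_ ?_
    · apply Continuous.aestronglyMeasurable
      exact continuous_const.mul
        (((continuous_abs).mul ψ.continuous.norm).mul hcont'.norm)
    · filter_upwards with x
      have h0 : 0 ≤ 2 * ((|x| * ‖ψ x‖) * ‖deriv (⇑ψ) x‖) := by positivity
      rw [Real.norm_of_nonneg h0]
      calc 2 * ((|x| * ‖ψ x‖) * ‖deriv (⇑ψ) x‖)
          ≤ 2 * ((|x| * ‖ψ x‖) * C') := by
            apply mul_le_mul_of_nonneg_left _ (by norm_num)
            exact mul_le_mul_of_nonneg_left (hC'b x) (by positivity)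
        _ = 2 * C' * (‖x‖ ^ 1 * ‖ψ x‖) := by
            rw [Real.norm_eq_abs]; ring
  have hstep : (∫ x : ℝ, ‖ψ x‖ ^ 2) ≤
      ∫ x : ℝ, 2 * ((|x| * ‖ψ x‖) * ‖deriv (⇑ψ) x‖) := by
    rw [hre]
    have : (- ∫ x : ℝ, (u x * v' x).re) = ∫ x : ℝ, -(u x * v' x).re := by
      rw [integral_neg]
    rw [this]
    apply integral_mono hintre.neg hbound2
    intro x
    have h1 : -(u x * v' x).re ≤ ‖u x * v' x‖ := by
      have := Complex.abs_re_le_norm (u x * v' x)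
      have h2 : |(u x * v' x).re| ≤ ‖u x * v' x‖ := by
        exact this
      have := neg_abs_le ((u x * v' x).re)
      linarith [abs_nonneg ((u x * v' x).re)]
    refine le_trans h1 ?_
    have h3 : ‖u x * v' x‖ = |x| * ‖v' x‖ := by
      simp [hu_def, norm_mul, Complex.norm_real, Real.norm_eq_abs]
    rw [h3]
    have h4 : ‖v' x‖ ≤ 2 * (‖ψ x‖ * ‖deriv (⇑ψ) x‖) := by
      calc ‖v' x‖ ≤ ‖deriv (⇑ψ) x * (starRingEnd ℂ) (ψ x)‖
            + ‖ψ x * (starRingEnd ℂ) (deriv (⇑ψ) x)‖ := norm_add_le _ _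
        _ = 2 * (‖ψ x‖ * ‖deriv (⇑ψ) x‖) := by
            simp [norm_mul]; ring
    calc |x| * ‖v' x‖ ≤ |x| * (2 * (‖ψ x‖ * ‖deriv (⇑ψ) x‖)) :=
          mul_le_mul_of_nonneg_left h4 (abs_nonneg x)
      _ = 2 * ((|x| * ‖ψ x‖) * ‖deriv (⇑ψ) x‖) := by ring
  -- Cauchy–Schwarz
  set f : ℝ → ℝ := fun x => |x| * ‖ψ x‖ with hf_def
  set g : ℝ → ℝ := fun x => ‖deriv (⇑ψ) x‖ with hg_def
  have hf_meas : AEStronglyMeasurable f volume :=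
    (Continuous.aestronglyMeasurable ((continuous_abs).mul ψ.continuous.norm))
  have hg_meas : AEStronglyMeasurable g volume :=
    (Continuous.aestronglyMeasurable hcont'.norm)
  have hf_mem : MemLp f 2 volume := by
    rw [memLp_two_iff_integrable_sq hf_meas]
    have hint2 : Integrable (fun x : ℝ => ‖x‖ ^ 2 * ‖ψ x‖) volume :=
      ψ.integrable_pow_mul volume 2
    refine Integrable.mono' (hint2.const_mul C) ?_ ?_
    · exact (Continuous.aestronglyMeasurable
        (((continuous_abs).mul ψ.continuous.norm).pow 2))
    · filter_upwards with x
      have h0 : (0:ℝ) ≤ f x ^ 2 := sq_nonneg _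
      rw [Real.norm_of_nonneg h0]
      have : f x ^ 2 = (|x| ^ 2 * ‖ψ x‖) * ‖ψ x‖ := by
        rw [hf_def]; ring
      rw [this]
      calc (|x| ^ 2 * ‖ψ x‖) * ‖ψ x‖ ≤ (|x| ^ 2 * ‖ψ x‖) * C :=
            mul_le_mul_of_nonneg_left (hCb x) (by positivity)
        _ = C * (‖x‖ ^ 2 * ‖ψ x‖) := by rw [Real.norm_eq_abs]; ring
  have hg_mem : MemLp g 2 volume := by
    rw [memLp_two_iff_integrable_sq hg_meas]
    refine Integrable.mono' (hintψ'.norm.const_mul C') ?_ ?_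
    · exact (Continuous.aestronglyMeasurable (hcont'.norm.pow 2))
    · filter_upwards with x
      have h0 : (0:ℝ) ≤ g x ^ 2 := sq_nonneg _
      rw [Real.norm_of_nonneg h0]
      have : g x ^ 2 = ‖deriv (⇑ψ) x‖ * ‖deriv (⇑ψ) x‖ := by
        rw [hg_def]; ring
      rw [this]
      exact mul_le_mul_of_nonneg_right (hC'b x) (norm_nonneg _)
  have hCS : ∫ x : ℝ, f x * g x ≤
      (∫ x : ℝ, f x ^ (2:ℝ)) ^ ((1:ℝ)/2) * (∫ x : ℝ, g x ^ (2:ℝ)) ^ ((1:ℝ)/2) := by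
    apply integral_mul_le_Lp_mul_Lq_of_nonneg (Real.holderConjugate_iff.mpr ⟨one_lt_two, by norm_num⟩ : Real.HolderConjugate 2 2)
    · filter_upwards with x; positivity
    · filter_upwards with x; positivity
    · simpa [ENNReal.ofReal_ofNat] using hf_mem
    · simpa [ENNReal.ofReal_ofNat] using hg_mem
  -- rewrite CS in terms of sqrt and the original integrands
  have hfsq : ∀ x : ℝ, f x ^ (2:ℝ) = x ^ 2 * ‖ψ x‖ ^ 2 := fun x => by
    rw [show (2:ℝ) = ((2:ℕ):ℝ) by norm_num, Real.rpow_natCast]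
    rw [hf_def]
    rw [mul_pow, sq_abs]
  have hgsq : ∀ x : ℝ, g x ^ (2:ℝ) = ‖deriv (⇑ψ) x‖ ^ 2 := fun x => by
    rw [show (2:ℝ) = ((2:ℕ):ℝ) by norm_num, Real.rpow_natCast]
  have hA : (0:ℝ) ≤ ∫ x : ℝ, x ^ 2 * ‖ψ x‖ ^ 2 :=
    integral_nonneg fun x => by positivity
  have hB : (0:ℝ) ≤ ∫ x : ℝ, ‖deriv (⇑ψ) x‖ ^ 2 :=
    integral_nonneg fun x => by positivity
  have hCS' : ∫ x : ℝ, f x * g x ≤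
      Real.sqrt (∫ x : ℝ, x ^ 2 * ‖ψ x‖ ^ 2) *
        Real.sqrt (∫ x : ℝ, ‖deriv (⇑ψ) x‖ ^ 2) := by
    have e1 : (∫ x : ℝ, f x ^ (2:ℝ)) = ∫ x : ℝ, x ^ 2 * ‖ψ x‖ ^ 2 := by
      exact integral_congr_ae (Filter.Eventually.of_forall hfsq)
    have e2 : (∫ x : ℝ, g x ^ (2:ℝ)) = ∫ x : ℝ, ‖deriv (⇑ψ) x‖ ^ 2 := by
      exact integral_congr_ae (Filter.Eventually.of_forall hgsq)
    rw [e1, e2] at hCS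
    rw [Real.sqrt_eq_rpow, Real.sqrt_eq_rpow]
    exact hCS
  -- put everything together
  have hfinal : (∫ x : ℝ, ‖ψ x‖ ^ 2) ≤
      2 * (Real.sqrt (∫ x : ℝ, x ^ 2 * ‖ψ x‖ ^ 2) *
        Real.sqrt (∫ x : ℝ, ‖deriv (⇑ψ) x‖ ^ 2)) := by
    have h2 : (∫ x : ℝ, 2 * ((|x| * ‖ψ x‖) * ‖deriv (⇑ψ) x‖)) =
        2 * ∫ x : ℝ, f x * g x := by
      rw [← integral_const_mul]
    calc (∫ x : ℝ, ‖ψ x‖ ^ 2) ≤ ∫ x : ℝ, 2 * ((|x| * ‖ψ x‖) * ‖deriv (⇑ψ) x‖) := hstep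
      _ = 2 * ∫ x : ℝ, f x * g x := h2
      _ ≤ 2 * (Real.sqrt (∫ x : ℝ, x ^ 2 * ‖ψ x‖ ^ 2) *
          Real.sqrt (∫ x : ℝ, ‖deriv (⇑ψ) x‖ ^ 2)) := by
          exact mul_le_mul_of_nonneg_left hCS' (by norm_num)
  exact hfinal

/-- Weyl's form of Heisenberg's uncertainty principle for a Schwartz function on `ℝ`:
`(∫ x²|ψ(x)|² dx)^{1/2} (∫ ħ²|ψ'(x)|² dx)^{1/2} ≥ (ħ/2) ∫ |ψ(x)|² dx`. -/
theorem weyl_uncertainty (hbar : ℝ) (hbar_pos : 0 < hbar) (ψ : SchwartzMap ℝ ℂ) :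
    Real.sqrt (∫ x : ℝ, x ^ 2 * ‖ψ x‖ ^ 2) *
      Real.sqrt (∫ x : ℝ, hbar ^ 2 * ‖deriv (⇑ψ) x‖ ^ 2) ≥
    (hbar / 2) * ∫ x : ℝ, ‖ψ x‖ ^ 2 := by
  have key := weyl_key ψ
  have h1 : (∫ x : ℝ, hbar ^ 2 * ‖deriv (⇑ψ) x‖ ^ 2) =
      hbar ^ 2 * ∫ x : ℝ, ‖deriv (⇑ψ) x‖ ^ 2 := integral_const_mul _ _
  have h2 : Real.sqrt (∫ x : ℝ, hbar ^ 2 * ‖deriv (⇑ψ) x‖ ^ 2) =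
      hbar * Real.sqrt (∫ x : ℝ, ‖deriv (⇑ψ) x‖ ^ 2) := by
    rw [h1, Real.sqrt_mul (sq_nonneg hbar), Real.sqrt_sq hbar_pos.le]
  rw [ge_iff_le, h2]
  have hA : (0:ℝ) ≤ Real.sqrt (∫ x : ℝ, x ^ 2 * ‖ψ x‖ ^ 2) := Real.sqrt_nonneg _
  nlinarith [key, hbar_pos]
end

section
/- Let H be a complex inner product space, let A, B : H → H be symmetric linear maps (⟨Au, v⟩ = ⟨u, Av⟩ and similarly for B), and let ψ ∈ H with ‖ψ‖ = 1. Set ⟨A⟩_ψ = ⟨Aψ, ψ⟩, (ΔA)_ψ² = ⟨A²⟩_ψ − ⟨A⟩_ψ², (ΔB)_ψ² = ⟨B²⟩_ψ − ⟨B⟩_ψ², Δ(A,B)_ψ = (1/2)⟨(AB + BA)ψ, ψ⟩ − ⟨A⟩_ψ⟨B⟩_ψ, and ⟨[A,B]⟩_ψ = ⟨(AB − BA)ψ, ψ⟩. Then (ΔA)_ψ² (ΔB)_ψ² ≥ Δ(A,B)_ψ² + (1/4)|⟨[A,B]⟩_ψ|² (Schrödinger's form of the uncertainty principle). -/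
/-!
With `f = Aψ - ⟨A⟩ψ` and `g = Bψ - ⟨B⟩ψ`, symmetry of `A`, `B` and `‖ψ‖ = 1` give
`‖f‖² = (ΔA)²`, `‖g‖² = (ΔB)²`, `re ⟪f, g⟫ = Δ(A,B)` and `|⟨[A,B]⟩| = 2 |im ⟪f, g⟫|`,
so the inequality is Cauchy–Schwarz, `(re ⟪f, g⟫)² + (im ⟪f, g⟫)² ≤ ‖f‖² ‖g‖²`.
-/

open RCLike

section

variable {𝕜 E : Type*} [RCLike 𝕜] [SeminormedAddCommGroup E] [InnerProductSpace 𝕜 E]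

local notation "⟪" x ", " y "⟫" => inner 𝕜 x y

theorem inner_sub_smul_sub_smul_of_norm_eq_one {ψ : E} (hψ : ‖ψ‖ = 1) (u v : E) :
    ⟪u - ⟪ψ, u⟫ • ψ, v - ⟪ψ, v⟫ • ψ⟫ = ⟪u, v⟫ - ⟪u, ψ⟫ * ⟪ψ, v⟫ := by
  have hψψ : ⟪ψ, ψ⟫ = 1 := by simp [inner_self_eq_norm_sq_to_K, hψ]
  simp only [inner_sub_left, inner_sub_right, inner_smul_left, inner_smul_right, inner_conj_symm,
    hψψ]
  ring

namespace LinearMap.IsSymmetric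

variable {T S : E →ₗ[𝕜] E} {ψ : E}

theorem inner_sub_smul_sub_smul (hT : T.IsSymmetric) (hS : S.IsSymmetric) (hψ : ‖ψ‖ = 1) :
    ⟪T ψ - ⟪ψ, T ψ⟫ • ψ, S ψ - ⟪ψ, S ψ⟫ • ψ⟫ =
      ⟪T ψ, S ψ⟫ - ((re ⟪T ψ, ψ⟫ * re ⟪S ψ, ψ⟫ : ℝ) : 𝕜) := by
  rw [inner_sub_smul_sub_smul_of_norm_eq_one hψ, ← hS ψ ψ, ofReal_mul,
    hT.coe_re_inner_apply_self, hS.coe_re_inner_apply_self]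

theorem norm_sub_smul_sq (hT : T.IsSymmetric) (hψ : ‖ψ‖ = 1) :
    ‖T ψ - ⟪ψ, T ψ⟫ • ψ‖ ^ 2 = re ⟪T (T ψ), ψ⟫ - re ⟪T ψ, ψ⟫ ^ 2 := by
  rw [@norm_sq_eq_re_inner 𝕜, hT.inner_sub_smul_sub_smul hT hψ, hT (T ψ) ψ, map_sub, ofReal_re,
    sq]

theorem re_inner_sub_smul_sub_smul (hT : T.IsSymmetric) (hS : S.IsSymmetric) (hψ : ‖ψ‖ = 1) :
    re ⟪T ψ - ⟪ψ, T ψ⟫ • ψ, S ψ - ⟪ψ, S ψ⟫ • ψ⟫ =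
      1 / 2 * re ⟪T (S ψ) + S (T ψ), ψ⟫ - re ⟪T ψ, ψ⟫ * re ⟪S ψ, ψ⟫ := by
  rw [hT.inner_sub_smul_sub_smul hS hψ, inner_add_left, hT (S ψ) ψ, hS (T ψ) ψ,
    ← inner_conj_symm (S ψ) (T ψ), map_sub, ofReal_re, map_add, conj_re]
  ring

theorem norm_inner_commutator_sq (hT : T.IsSymmetric) (hS : S.IsSymmetric) (hψ : ‖ψ‖ = 1) :
    ‖⟪T (S ψ) - S (T ψ), ψ⟫‖ ^ 2 =
      4 * im ⟪T ψ - ⟪ψ, T ψ⟫ • ψ, S ψ - ⟪ψ, S ψ⟫ • ψ⟫ ^ 2 := by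
  rw [hT.inner_sub_smul_sub_smul hS hψ, inner_sub_left, hT (S ψ) ψ, hS (T ψ) ψ,
    ← inner_conj_symm (S ψ) (T ψ), norm_sq_eq_def]
  simp only [map_sub, ofReal_im, conj_re, conj_im]
  ring

end LinearMap.IsSymmetric

end

/-- Schrödinger's form of the uncertainty principle: for symmetric operators `A`, `B` on a
complex inner product space and a unit vector `ψ`,
`(ΔA)²_ψ (ΔB)²_ψ ≥ Δ(A,B)²_ψ + (1/4)|⟨[A,B]⟩_ψ|²`. -/
theorem schroedinger_uncertainty {H : Type*} [NormedAddCommGroup H] [InnerProductSpace ℂ H]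
    (A B : H →ₗ[ℂ] H)
    (hA : ∀ u v : H, (inner ℂ (A u) v : ℂ) = inner ℂ u (A v))
    (hB : ∀ u v : H, (inner ℂ (B u) v : ℂ) = inner ℂ u (B v))
    (ψ : H) (hψ : ‖ψ‖ = 1) :
    ((inner ℂ (A (A ψ)) ψ : ℂ).re - ((inner ℂ (A ψ) ψ : ℂ).re) ^ 2) *
      ((inner ℂ (B (B ψ)) ψ : ℂ).re - ((inner ℂ (B ψ) ψ : ℂ).re) ^ 2) ≥
    ((1 / 2) * (inner ℂ (A (B ψ) + B (A ψ)) ψ : ℂ).re -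
        (inner ℂ (A ψ) ψ : ℂ).re * (inner ℂ (B ψ) ψ : ℂ).re) ^ 2 +
      (1 / 4) * ‖(inner ℂ (A (B ψ) - B (A ψ)) ψ : ℂ)‖ ^ 2 := by
  have hA' : A.IsSymmetric := hA
  have hB' : B.IsSymmetric := hB
  set f := A ψ - inner ℂ ψ (A ψ) • ψ
  set g := B ψ - inner ℂ ψ (B ψ) • ψ
  -- stated with `Complex.re`, `Complex.im`: at `ℂ` they agree with `RCLike.re`, `RCLike.im` only up to defeq
  have hf : ‖f‖ ^ 2 = (inner ℂ (A (A ψ)) ψ).re - (inner ℂ (A ψ) ψ).re ^ 2 :=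
    hA'.norm_sub_smul_sq hψ
  have hg : ‖g‖ ^ 2 = (inner ℂ (B (B ψ)) ψ).re - (inner ℂ (B ψ) ψ).re ^ 2 :=
    hB'.norm_sub_smul_sq hψ
  have hre : (inner ℂ f g).re =
      1 / 2 * (inner ℂ (A (B ψ) + B (A ψ)) ψ).re - (inner ℂ (A ψ) ψ).re * (inner ℂ (B ψ) ψ).re :=
    hA'.re_inner_sub_smul_sub_smul hB' hψ
  have him : ‖inner ℂ (A (B ψ) - B (A ψ)) ψ‖ ^ 2 = 4 * (inner ℂ f g).im ^ 2 :=
    hA'.norm_inner_commutator_sq hB' hψ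
  rw [← hf, ← hg, ← hre, him, ge_iff_le]
  calc (inner ℂ f g).re ^ 2 + 1 / 4 * (4 * (inner ℂ f g).im ^ 2)
      = ‖inner ℂ f g‖ ^ 2 := by rw [Complex.sq_norm, Complex.normSq_apply]; ring
    _ ≤ (‖f‖ * ‖g‖) ^ 2 := by gcongr; exact norm_inner_le_norm f g
    _ = ‖f‖ ^ 2 * ‖g‖ ^ 2 := mul_pow _ _ _
end

section
/- Let ħ > 0, let ψ : ℝⁿ → ℂ be a Schwartz function with ∫_{ℝⁿ} |ψ|² = 1, and fix j with 1 ≤ j ≤ n. Define ⟨X_j⟩ = ∫ x_j |ψ(x)|² dx, ⟨P_j⟩ = ∫ conj(ψ(x)) (−iħ ∂_{x_j}ψ(x)) dx, (ΔX_j)² = ∫ x_j² |ψ|² dx − ⟨X_j⟩², (ΔP_j)² = ∫ ħ²|∂_{x_j}ψ|² dx − ⟨P_j⟩², and Δ(X_j,P_j) = Re ∫ conj(ψ(x)) x_j (−iħ ∂_{x_j}ψ(x)) dx − ⟨X_j⟩⟨P_j⟩. Then (ΔX_j)² (ΔP_j)² ≥ Δ(X_j,P_j)² + ħ²/4. -/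
open MeasureTheory

section HSaux
open SchwartzMap
variable {n : ℕ}

lemma HS_abs_apply_le_norm (x : EuclideanSpace ℝ (Fin n)) (j : Fin n) : |x j| ≤ ‖x‖ := by
  rw [EuclideanSpace.norm_eq, ← Real.sqrt_sq_eq_abs]
  apply Real.sqrt_le_sqrt
  calc (x j)^2 = ‖x j‖^2 := by simp [sq_abs]
  _ ≤ ∑ i, ‖x i‖^2 :=
    Finset.single_le_sum (f := fun i => ‖x i‖^2) (fun i _ => by positivity) (Finset.mem_univ j)

lemma HS_integrable_aux {α : Type*} [NormedAddCommGroup α]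
    (f g : SchwartzMap (EuclideanSpace ℝ (Fin n)) ℂ) (k : ℕ) (C : ℝ) (hC : 0 ≤ C)
    {h : EuclideanSpace ℝ (Fin n) → α} (hc : Continuous h)
    (hb : ∀ x, ‖h x‖ ≤ C * (‖x‖ ^ k * (‖f x‖ * ‖g x‖))) :
    Integrable h (volume : Measure (EuclideanSpace ℝ (Fin n))) := by
  have hgb : ∀ x, ‖g x‖ ≤ SchwartzMap.seminorm ℝ 0 0 g := fun x => g.norm_le_seminorm ℝ x
  have hint : Integrable
      (fun x : EuclideanSpace ℝ (Fin n) =>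
        (C * SchwartzMap.seminorm ℝ 0 0 g) * (‖x‖ ^ k * ‖f x‖)) volume :=
    (f.integrable_pow_mul volume k).const_mul _
  refine hint.mono' hc.aestronglyMeasurable (Filter.Eventually.of_forall fun x => ?_)
  refine (hb x).trans ?_
  have h1 : (0:ℝ) ≤ ‖x‖ ^ k * ‖f x‖ := by positivity
  have h2 := hgb x
  nlinarith [mul_le_mul_of_nonneg_left h2 (mul_nonneg hC h1), norm_nonneg (g x)]

lemma HS_normsub (z w : ℂ) : ‖z - w‖^2 = ‖z‖^2 - 2*((starRingEnd ℂ) w * z).re + ‖w‖^2 := by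
  simp only [Complex.sq_norm, Complex.normSq_apply, Complex.mul_re,
    Complex.sub_re, Complex.sub_im, Complex.conj_re, Complex.conj_im]
  ring

lemma HS_conj_mul_self (z : ℂ) : (starRingEnd ℂ) z * z = ((‖z‖^2 : ℝ) : ℂ) := by
  rw [Complex.conj_mul']
  norm_cast

end HSaux

/-- The momentum operator `P_j = -iħ ∂_{x_j}` applied to `ψ` at `x`. -/
noncomputable def Pop (n : ℕ) (hbar : ℝ) (ψ : SchwartzMap (EuclideanSpace ℝ (Fin n)) ℂ)
    (j : Fin n) (x : EuclideanSpace ℝ (Fin n)) : ℂ :=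
  -Complex.I * (hbar : ℂ) * fderiv ℝ (⇑ψ) x (EuclideanSpace.single j 1)

/-- `⟨X_j⟩_ψ = ∫ x_j |ψ(x)|² dx`. -/
noncomputable def meanX (n : ℕ) (ψ : SchwartzMap (EuclideanSpace ℝ (Fin n)) ℂ)
    (j : Fin n) : ℝ :=
  ∫ x : EuclideanSpace ℝ (Fin n), x j * ‖ψ x‖ ^ 2

/-- `⟨P_j⟩_ψ = ∫ conj(ψ(x)) (-iħ ∂_{x_j}ψ(x)) dx` (a real number). -/
noncomputable def meanP (n : ℕ) (hbar : ℝ) (ψ : SchwartzMap (EuclideanSpace ℝ (Fin n)) ℂ)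
    (j : Fin n) : ℝ :=
  (∫ x : EuclideanSpace ℝ (Fin n), (starRingEnd ℂ) (ψ x) * Pop n hbar ψ j x).re

/-- `(ΔX_j)²_ψ = ∫ x_j² |ψ(x)|² dx - ⟨X_j⟩²`. -/
noncomputable def varX (n : ℕ) (ψ : SchwartzMap (EuclideanSpace ℝ (Fin n)) ℂ)
    (j : Fin n) : ℝ :=
  (∫ x : EuclideanSpace ℝ (Fin n), (x j) ^ 2 * ‖ψ x‖ ^ 2) - (meanX n ψ j) ^ 2

/-- `(ΔP_j)²_ψ = ∫ ħ² |∂_{x_j}ψ(x)|² dx - ⟨P_j⟩²`. -/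
noncomputable def varP (n : ℕ) (hbar : ℝ) (ψ : SchwartzMap (EuclideanSpace ℝ (Fin n)) ℂ)
    (j : Fin n) : ℝ :=
  (∫ x : EuclideanSpace ℝ (Fin n),
      hbar ^ 2 * ‖fderiv ℝ (⇑ψ) x (EuclideanSpace.single j 1)‖ ^ 2) -
    (meanP n hbar ψ j) ^ 2

/-- `Δ(X_j,P_j)_ψ = Re ∫ conj(ψ(x)) x_j (-iħ ∂_{x_j}ψ(x)) dx - ⟨X_j⟩⟨P_j⟩`. -/
noncomputable def covXP (n : ℕ) (hbar : ℝ) (ψ : SchwartzMap (EuclideanSpace ℝ (Fin n)) ℂ)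
    (j : Fin n) : ℝ :=
  (∫ x : EuclideanSpace ℝ (Fin n),
      (starRingEnd ℂ) (ψ x) * ((x j : ℝ) : ℂ) * Pop n hbar ψ j x).re -
    meanX n ψ j * meanP n hbar ψ j

set_option maxHeartbeats 1000000 in
/-- Schrödinger–Robertson uncertainty relation for the conjugate pair `X_j`, `P_j = -iħ∂_{x_j}`
acting on a normalized Schwartz function on `ℝⁿ`:
`(ΔX_j)² (ΔP_j)² ≥ Δ(X_j,P_j)² + ħ²/4`. -/
theorem heisenberg_schroedinger_Xj_Pj (n : ℕ) (hbar : ℝ) (hbar_pos : 0 < hbar)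
    (ψ : SchwartzMap (EuclideanSpace ℝ (Fin n)) ℂ)
    (hnorm : (∫ x : EuclideanSpace ℝ (Fin n), ‖ψ x‖ ^ 2) = 1) (j : Fin n) :
    varX n ψ j * varP n hbar ψ j ≥ covXP n hbar ψ j ^ 2 + hbar ^ 2 / 4 := by
  have hbar0 : (0:ℝ) ≤ hbar := hbar_pos.le
  set v : EuclideanSpace ℝ (Fin n) := EuclideanSpace.single j 1 with hv
  set ψ' : SchwartzMap (EuclideanSpace ℝ (Fin n)) ℂ := LineDeriv.lineDerivOpCLM ℝ (SchwartzMap (EuclideanSpace ℝ (Fin n)) ℂ) v ψ with hψ'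
  have hd : ∀ x, fderiv ℝ (⇑ψ) x v = ψ' x := fun x => (SchwartzMap.lineDerivOp_apply_eq_fderiv v ψ x).symm
  have hPop : ∀ x, Pop n hbar ψ j x = -Complex.I * hbar * ψ' x := fun x => by
    rw [show Pop n hbar ψ j x = -Complex.I * hbar * fderiv ℝ (⇑ψ) x (EuclideanSpace.single j 1)
      from rfl, ← hv, hd]
  set a : ℝ := meanX n ψ j with ha
  set b : ℝ := meanP n hbar ψ j with hb
  have habsj : ∀ x : EuclideanSpace ℝ (Fin n), |x j| ≤ ‖x‖ := fun x => HS_abs_apply_le_norm x j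
  -- continuity
  have hcψ : Continuous (⇑ψ) := ψ.continuous
  have hcψ' : Continuous (⇑ψ') := ψ'.continuous
  have hcj : Continuous (fun x : EuclideanSpace ℝ (Fin n) => x j) := PiLp.continuous_apply 2 _ j
  have hcjC : Continuous (fun x : EuclideanSpace ℝ (Fin n) => ((x j : ℝ) : ℂ)) :=
    Complex.continuous_ofReal.comp hcj
  have hccψ : Continuous (fun x => (starRingEnd ℂ) (ψ x)) := continuous_star.comp hcψ
  have hccψ' : Continuous (fun x => (starRingEnd ℂ) (ψ' x)) := continuous_star.comp hcψ'
  have hcPop : Continuous (Pop n hbar ψ j) := by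
    have : (Pop n hbar ψ j) = fun x => -Complex.I * hbar * ψ' x := funext hPop
    rw [this]; exact continuous_const.mul hcψ'
  have hnormPop : ∀ x, ‖Pop n hbar ψ j x‖ = hbar * ‖ψ' x‖ := fun x => by
    rw [hPop x, norm_mul, norm_mul, norm_neg, Complex.norm_I, one_mul, Complex.norm_real,
      Real.norm_eq_abs, abs_of_nonneg hbar0]
  -- integrability
  have iR1 : Integrable (fun x : EuclideanSpace ℝ (Fin n) => ‖ψ x‖^2) volume := by
    refine HS_integrable_aux ψ ψ 0 1 zero_le_one (hcψ.norm.pow 2) (fun x => ?_)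
    rw [Real.norm_eq_abs, abs_of_nonneg (by positivity)]
    exact le_of_eq (by ring)
  have iR2 : Integrable (fun x : EuclideanSpace ℝ (Fin n) => x j * ‖ψ x‖^2) volume := by
    refine HS_integrable_aux ψ ψ 1 1 zero_le_one (hcj.mul (hcψ.norm.pow 2)) (fun x => ?_)
    rw [Real.norm_eq_abs, abs_mul, abs_of_nonneg (a := ‖ψ x‖^2) (by positivity)]
    calc |x j| * ‖ψ x‖^2 ≤ ‖x‖ * ‖ψ x‖^2 := by gcongr; exact habsj x
    _ = 1 * (‖x‖^1 * (‖ψ x‖ * ‖ψ x‖)) := by ring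
  have iR3 : Integrable (fun x : EuclideanSpace ℝ (Fin n) => (x j)^2 * ‖ψ x‖^2) volume := by
    refine HS_integrable_aux ψ ψ 2 1 zero_le_one ((hcj.pow 2).mul (hcψ.norm.pow 2)) (fun x => ?_)
    rw [Real.norm_eq_abs, abs_of_nonneg (by positivity)]
    calc (x j)^2 * ‖ψ x‖^2 ≤ ‖x‖^2 * ‖ψ x‖^2 := by
          have h2 : (x j)^2 ≤ ‖x‖^2 := by nlinarith [habsj x, abs_nonneg (x j), sq_abs (x j)]
          exact mul_le_mul_of_nonneg_right h2 (by positivity)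
    _ = 1 * (‖x‖^2 * (‖ψ x‖ * ‖ψ x‖)) := by ring
  have iR4 : Integrable (fun x : EuclideanSpace ℝ (Fin n) => hbar^2 * ‖ψ' x‖^2) volume := by
    refine HS_integrable_aux ψ' ψ' 0 (hbar^2) (by positivity)
      (continuous_const.mul (hcψ'.norm.pow 2)) (fun x => ?_)
    rw [Real.norm_eq_abs, abs_of_nonneg (by positivity)]
    exact le_of_eq (by ring)
  have iR5 : Integrable
      (fun x : EuclideanSpace ℝ (Fin n) => ((starRingEnd ℂ) (ψ x) * Pop n hbar ψ j x).re)
      volume := by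
    refine HS_integrable_aux ψ ψ' 0 hbar hbar0
      (Complex.continuous_re.comp (hccψ.mul hcPop)) (fun x => ?_)
    calc ‖((starRingEnd ℂ) (ψ x) * Pop n hbar ψ j x).re‖
        ≤ ‖(starRingEnd ℂ) (ψ x) * Pop n hbar ψ j x‖ := by
          rw [Real.norm_eq_abs]; exact Complex.abs_re_le_norm _
    _ = hbar * (‖x‖^0 * (‖ψ x‖ * ‖ψ' x‖)) := by
          rw [norm_mul, RCLike.norm_conj, hnormPop x]; ring
  have iC1 : Integrable
      (fun x : EuclideanSpace ℝ (Fin n) => (starRingEnd ℂ) (ψ x) * Pop n hbar ψ j x) volume := by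
    refine HS_integrable_aux ψ ψ' 0 hbar hbar0 (hccψ.mul hcPop) (fun x => ?_)
    rw [norm_mul, RCLike.norm_conj, hnormPop x]
    exact le_of_eq (by ring)
  have iC2 : Integrable
      (fun x : EuclideanSpace ℝ (Fin n) =>
        (starRingEnd ℂ) (ψ x) * ((x j : ℝ) : ℂ) * Pop n hbar ψ j x) volume := by
    refine HS_integrable_aux ψ ψ' 1 hbar hbar0 ((hccψ.mul hcjC).mul hcPop) (fun x => ?_)
    rw [norm_mul, norm_mul, RCLike.norm_conj, hnormPop x, Complex.norm_real, Real.norm_eq_abs]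
    calc ‖ψ x‖ * |x j| * (hbar * ‖ψ' x‖) ≤ ‖ψ x‖ * ‖x‖ * (hbar * ‖ψ' x‖) := by
          gcongr; exact habsj x
    _ = hbar * (‖x‖^1 * (‖ψ x‖ * ‖ψ' x‖)) := by ring
  have iC3 : Integrable
      (fun x : EuclideanSpace ℝ (Fin n) => (starRingEnd ℂ) (ψ x) * ψ' x) volume := by
    refine HS_integrable_aux ψ ψ' 0 1 zero_le_one (hccψ.mul hcψ') (fun x => ?_)
    rw [norm_mul, RCLike.norm_conj]
    exact le_of_eq (by ring)
  have iC4 : Integrable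
      (fun x : EuclideanSpace ℝ (Fin n) => (starRingEnd ℂ) (ψ' x) * ψ x) volume := by
    refine HS_integrable_aux ψ' ψ 0 1 zero_le_one (hccψ'.mul hcψ) (fun x => ?_)
    rw [norm_mul, RCLike.norm_conj]
    exact le_of_eq (by ring)
  have iC0 : Integrable
      (fun x : EuclideanSpace ℝ (Fin n) => (starRingEnd ℂ) (ψ x) * ψ x) volume := by
    refine HS_integrable_aux ψ ψ 0 1 zero_le_one (hccψ.mul hcψ) (fun x => ?_)
    rw [norm_mul, RCLike.norm_conj]
    exact le_of_eq (by ring)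
  have iC5 : Integrable
      (fun x : EuclideanSpace ℝ (Fin n) =>
        ((x j : ℝ) : ℂ) * (starRingEnd ℂ) (ψ x) * ψ' x) volume := by
    refine HS_integrable_aux ψ ψ' 1 1 zero_le_one ((hcjC.mul hccψ).mul hcψ') (fun x => ?_)
    rw [norm_mul, norm_mul, RCLike.norm_conj, Complex.norm_real, Real.norm_eq_abs]
    calc |x j| * ‖ψ x‖ * ‖ψ' x‖ ≤ ‖x‖ * ‖ψ x‖ * ‖ψ' x‖ := by gcongr; exact habsj x
    _ = 1 * (‖x‖^1 * (‖ψ x‖ * ‖ψ' x‖)) := by ring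
  have iC6 : Integrable
      (fun x : EuclideanSpace ℝ (Fin n) =>
        ((x j : ℝ) : ℂ) * (starRingEnd ℂ) (ψ' x) * ψ x) volume := by
    refine HS_integrable_aux ψ' ψ 1 1 zero_le_one ((hcjC.mul hccψ').mul hcψ) (fun x => ?_)
    rw [norm_mul, norm_mul, RCLike.norm_conj, Complex.norm_real, Real.norm_eq_abs]
    calc |x j| * ‖ψ' x‖ * ‖ψ x‖ ≤ ‖x‖ * ‖ψ' x‖ * ‖ψ x‖ := by gcongr; exact habsj x
    _ = 1 * (‖x‖^1 * (‖ψ' x‖ * ‖ψ x‖)) := by ring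
  have iC7 : Integrable
      (fun x : EuclideanSpace ℝ (Fin n) =>
        ((x j : ℝ) : ℂ) * (starRingEnd ℂ) (ψ x) * ψ x) volume := by
    refine HS_integrable_aux ψ ψ 1 1 zero_le_one ((hcjC.mul hccψ).mul hcψ) (fun x => ?_)
    rw [norm_mul, norm_mul, RCLike.norm_conj, Complex.norm_real, Real.norm_eq_abs]
    calc |x j| * ‖ψ x‖ * ‖ψ x‖ ≤ ‖x‖ * ‖ψ x‖ * ‖ψ x‖ := by gcongr; exact habsj x
    _ = 1 * (‖x‖^1 * (‖ψ x‖ * ‖ψ x‖)) := by ring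
  -- derivative of conj ψ
  have hconjd : ∀ x, HasFDerivAt (fun y => (starRingEnd ℂ) (ψ y))
      ((Complex.conjCLE : ℂ →L[ℝ] ℂ).comp (fderiv ℝ (⇑ψ) x)) x := fun x =>
    ((Complex.conjCLE : ℂ →L[ℝ] ℂ).hasFDerivAt).comp x (ψ.differentiable x).hasFDerivAt
  have hdconj : ∀ x, fderiv ℝ (fun y => (starRingEnd ℂ) (ψ y)) x v
      = (starRingEnd ℂ) (ψ' x) := fun x => by
    rw [(hconjd x).fderiv, ContinuousLinearMap.comp_apply, hd x]
    rfl
  have hdiffconj : Differentiable ℝ (fun y => (starRingEnd ℂ) (ψ y)) := fun x =>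
    (hconjd x).differentiableAt
  -- IBP 1
  have ibp1 := integral_mul_fderiv_eq_neg_fderiv_mul_of_integrable
      (μ := (volume : Measure (EuclideanSpace ℝ (Fin n))))
      (f := fun y => (starRingEnd ℂ) (ψ y)) (g := ⇑ψ) (v := v)
      (iC4.congr (Filter.Eventually.of_forall fun x => by simp only [hdconj]))
      (iC3.congr (Filter.Eventually.of_forall fun x => by simp only [hd]))
      iC0 (fun x _ => hdiffconj x) (fun x _ => ψ.differentiable x)
  simp only [hd, hdconj] at ibp1
  -- ibp1 : ∫ conjψ * ψ' = -∫ conjψ' * ψ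
  have hswap : (∫ x, (starRingEnd ℂ) (ψ' x) * ψ x)
      = (starRingEnd ℂ) (∫ x, (starRingEnd ℂ) (ψ x) * ψ' x) := by
    rw [← integral_conj]
    congr 1; funext x
    rw [map_mul, Complex.conj_conj]
    exact mul_comm _ _
  have hTre : (∫ x, (starRingEnd ℂ) (ψ x) * ψ' x).re = 0 := by
    rw [hswap] at ibp1
    have h := congrArg Complex.re ibp1
    simp only [Complex.neg_re, Complex.conj_re] at h
    linarith
  -- IBP 2
  have hvj : v j = 1 := by rw [hv]; simp [EuclideanSpace.single_apply]
  have hxd : ∀ x : EuclideanSpace ℝ (Fin n),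
      HasFDerivAt (fun x : EuclideanSpace ℝ (Fin n) => ((x j : ℝ) : ℂ))
        (Complex.ofRealCLM.comp (EuclideanSpace.proj (𝕜 := ℝ) j)) x := fun x =>
    (Complex.ofRealCLM.comp (EuclideanSpace.proj (𝕜 := ℝ) j)).hasFDerivAt
  have hf2 : ∀ x, HasFDerivAt
      (fun y : EuclideanSpace ℝ (Fin n) => ((y j : ℝ) : ℂ) * (starRingEnd ℂ) (ψ y))
      (((x j : ℝ) : ℂ) • ((Complex.conjCLE : ℂ →L[ℝ] ℂ).comp (fderiv ℝ (⇑ψ) x)) +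
        (Complex.ofRealCLM.comp (EuclideanSpace.proj (𝕜 := ℝ) j)).smulRight
          ((starRingEnd ℂ) (ψ x))) x :=
    fun x => (hxd x).mul' (hconjd x)
  have hdf2 : ∀ x, fderiv ℝ
      (fun y : EuclideanSpace ℝ (Fin n) => ((y j : ℝ) : ℂ) * (starRingEnd ℂ) (ψ y)) x v
      = ((x j : ℝ) : ℂ) * (starRingEnd ℂ) (ψ' x) + (starRingEnd ℂ) (ψ x) := fun x => by
    rw [(hf2 x).fderiv]
    simp only [ContinuousLinearMap.add_apply, ContinuousLinearMap.coe_smul',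
      Pi.smul_apply, ContinuousLinearMap.coe_comp', Function.comp_apply,
      ContinuousLinearMap.smulRight_apply, hd x, hvj]
    simp [smul_eq_mul, Complex.conjCLE_apply, hvj]
  have hdiff2 : Differentiable ℝ
      (fun y : EuclideanSpace ℝ (Fin n) => ((y j : ℝ) : ℂ) * (starRingEnd ℂ) (ψ y)) :=
    fun x => (hf2 x).differentiableAt
  have ibp2 := integral_mul_fderiv_eq_neg_fderiv_mul_of_integrable
      (μ := (volume : Measure (EuclideanSpace ℝ (Fin n))))
      (f := fun y : EuclideanSpace ℝ (Fin n) => ((y j : ℝ) : ℂ) * (starRingEnd ℂ) (ψ y))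
      (g := ⇑ψ) (v := v)
      ((iC6.add iC0).congr (Filter.Eventually.of_forall fun x => by
        simp only [Pi.add_apply, hdf2]; ring))
      (iC5.congr (Filter.Eventually.of_forall fun x => by simp only [hd]))
      iC7 (fun x _ => hdiff2 x) (fun x _ => ψ.differentiable x)
  simp only [hd, hdf2] at ibp2
  -- ibp2 : ∫ (x_j * conjψ) * ψ' = -∫ (x_j * conjψ' + conjψ) * ψ
  have hOfReal : ∀ f : EuclideanSpace ℝ (Fin n) → ℝ,
      (∫ x, ((f x : ℝ) : ℂ)) = ((∫ x, f x : ℝ) : ℂ) := fun f => integral_ofReal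
  have hS0c : (∫ x : EuclideanSpace ℝ (Fin n), (starRingEnd ℂ) (ψ x) * ψ x) = 1 := by
    have hpt : ∀ x : EuclideanSpace ℝ (Fin n),
        (starRingEnd ℂ) (ψ x) * ψ x = ((‖ψ x‖^2 : ℝ) : ℂ) := fun x => HS_conj_mul_self _
    rw [funext hpt, hOfReal, hnorm]
    norm_num
  have hsplit : (∫ x : EuclideanSpace ℝ (Fin n),
        (((x j : ℝ) : ℂ) * (starRingEnd ℂ) (ψ' x) + (starRingEnd ℂ) (ψ x)) * ψ x)
      = (∫ x : EuclideanSpace ℝ (Fin n), ((x j : ℝ) : ℂ) * (starRingEnd ℂ) (ψ' x) * ψ x)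
        + ∫ x : EuclideanSpace ℝ (Fin n), (starRingEnd ℂ) (ψ x) * ψ x := by
    rw [← integral_add iC6 iC0]
    congr 1; funext x; ring
  have hswap2 : (∫ x : EuclideanSpace ℝ (Fin n), ((x j : ℝ) : ℂ) * (starRingEnd ℂ) (ψ' x) * ψ x)
      = (starRingEnd ℂ)
          (∫ x : EuclideanSpace ℝ (Fin n), ((x j : ℝ) : ℂ) * (starRingEnd ℂ) (ψ x) * ψ' x) := by
    rw [← integral_conj]
    congr 1; funext x
    rw [map_mul, map_mul, Complex.conj_conj, Complex.conj_ofReal]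
    ring
  have hUre : (∫ x : EuclideanSpace ℝ (Fin n),
      ((x j : ℝ) : ℂ) * (starRingEnd ℂ) (ψ x) * ψ' x).re = -(1/2) := by
    rw [hsplit, hswap2, hS0c] at ibp2
    have h := congrArg Complex.re ibp2
    simp only [Complex.neg_re, Complex.add_re, Complex.conj_re, Complex.one_re] at h
    linarith
  -- T0 and T1
  have hmul_im : ∀ z : ℂ, ((-Complex.I * (hbar : ℂ)) * z).im = -hbar * z.re := fun z => by
    simp [Complex.mul_im, Complex.mul_re]
  have hT0 : (∫ x : EuclideanSpace ℝ (Fin n), (starRingEnd ℂ) (ψ x) * Pop n hbar ψ j x)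
      = (-Complex.I * hbar) *
          ∫ x : EuclideanSpace ℝ (Fin n), (starRingEnd ℂ) (ψ x) * ψ' x := by
    rw [← integral_const_mul]
    congr 1; funext x; rw [hPop x]; ring
  have hT0re : (∫ x : EuclideanSpace ℝ (Fin n),
      (starRingEnd ℂ) (ψ x) * Pop n hbar ψ j x).re = b := by rw [hb]; rfl
  have hT0im : (∫ x : EuclideanSpace ℝ (Fin n),
      (starRingEnd ℂ) (ψ x) * Pop n hbar ψ j x).im = 0 := by
    rw [hT0, hmul_im, hTre]; ring
  have hT1 : (∫ x : EuclideanSpace ℝ (Fin n),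
        (starRingEnd ℂ) (ψ x) * ((x j : ℝ) : ℂ) * Pop n hbar ψ j x)
      = (-Complex.I * hbar) *
          ∫ x : EuclideanSpace ℝ (Fin n), ((x j : ℝ) : ℂ) * (starRingEnd ℂ) (ψ x) * ψ' x := by
    rw [← integral_const_mul]
    congr 1; funext x; rw [hPop x]; ring
  have hT1im : (∫ x : EuclideanSpace ℝ (Fin n),
      (starRingEnd ℂ) (ψ x) * ((x j : ℝ) : ℂ) * Pop n hbar ψ j x).im = hbar / 2 := by
    rw [hT1, hmul_im, hUre]; ring
  have hT1re : (∫ x : EuclideanSpace ℝ (Fin n),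
      (starRingEnd ℂ) (ψ x) * ((x j : ℝ) : ℂ) * Pop n hbar ψ j x).re
      = covXP n hbar ψ j + a * b := by
    have hcov : covXP n hbar ψ j = (∫ x : EuclideanSpace ℝ (Fin n),
        (starRingEnd ℂ) (ψ x) * ((x j : ℝ) : ℂ) * Pop n hbar ψ j x).re - a * b := by
      rw [ha, hb]; rfl
    rw [hcov]; ring
  have hmean : (∫ x : EuclideanSpace ℝ (Fin n), x j * ‖ψ x‖^2) = a := by rw [ha]; rfl
  -- the two L² functions
  set F : EuclideanSpace ℝ (Fin n) → ℂ := fun x => (((x j : ℝ) : ℂ) - (a : ℂ)) * ψ x with hF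
  set G : EuclideanSpace ℝ (Fin n) → ℂ := fun x => Pop n hbar ψ j x - (b : ℂ) * ψ x with hG
  have hcF : Continuous F := by rw [hF]; exact (hcjC.sub continuous_const).mul hcψ
  have hcG : Continuous G := by rw [hG]; exact hcPop.sub (continuous_const.mul hcψ)
  have hFsq : ∀ x, ‖F x‖^2
      = (x j ^ 2 * ‖ψ x‖^2 - (2*a) * (x j * ‖ψ x‖^2)) + a^2 * ‖ψ x‖^2 := fun x => by
    have h1 : (((x j : ℝ) : ℂ) - (a : ℂ)) = ((x j - a : ℝ) : ℂ) := by push_cast; ring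
    simp only [hF, h1, norm_mul, Complex.norm_real, Real.norm_eq_abs]
    rw [mul_pow, sq_abs]; ring
  have hFint : Integrable (fun x => ‖F x‖^2) volume := by
    rw [funext hFsq]
    exact (iR3.sub (iR2.const_mul _)).add (iR1.const_mul _)
  have hFval : (∫ x, ‖F x‖^2) = varX n ψ j := by
    have e1 : (∫ x : EuclideanSpace ℝ (Fin n),
          (x j ^ 2 * ‖ψ x‖^2 - 2*a * (x j * ‖ψ x‖^2)) + a^2 * ‖ψ x‖^2)
        = (∫ x : EuclideanSpace ℝ (Fin n), x j ^ 2 * ‖ψ x‖^2 - 2*a * (x j * ‖ψ x‖^2))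
          + ∫ x : EuclideanSpace ℝ (Fin n), a^2 * ‖ψ x‖^2 :=
      integral_add (iR3.sub (iR2.const_mul (2*a))) (iR1.const_mul (a^2))
    have e2 : (∫ x : EuclideanSpace ℝ (Fin n), x j ^ 2 * ‖ψ x‖^2 - 2*a * (x j * ‖ψ x‖^2))
        = (∫ x : EuclideanSpace ℝ (Fin n), x j ^ 2 * ‖ψ x‖^2)
          - ∫ x : EuclideanSpace ℝ (Fin n), 2*a * (x j * ‖ψ x‖^2) :=
      integral_sub iR3 (iR2.const_mul (2*a))
    rw [funext hFsq]
    rw [show (fun x : EuclideanSpace ℝ (Fin n) =>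
        (x j ^ 2 * ‖ψ x‖^2 - (2*a) * (x j * ‖ψ x‖^2)) + a^2 * ‖ψ x‖^2)
      = fun x : EuclideanSpace ℝ (Fin n) =>
        (x j ^ 2 * ‖ψ x‖^2 - 2*a * (x j * ‖ψ x‖^2)) + a^2 * ‖ψ x‖^2 from rfl]
    rw [e1, e2, integral_const_mul, integral_const_mul, hnorm, hmean]
    have hvx : varX n ψ j
        = (∫ x : EuclideanSpace ℝ (Fin n), x j ^ 2 * ‖ψ x‖^2) - a^2 := by rw [ha]; rfl
    rw [hvx]; ring
  have hGsq : ∀ x, ‖G x‖^2 = (hbar^2 * ‖ψ' x‖^2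
      - (2*b) * ((starRingEnd ℂ) (ψ x) * Pop n hbar ψ j x).re) + b^2 * ‖ψ x‖^2 := fun x => by
    simp only [hG]
    rw [HS_normsub, hnormPop x, map_mul, Complex.conj_ofReal]
    have h2 : ((b : ℂ) * (starRingEnd ℂ) (ψ x) * Pop n hbar ψ j x).re
        = b * ((starRingEnd ℂ) (ψ x) * Pop n hbar ψ j x).re := by
      rw [mul_assoc]
      simp [Complex.mul_re]
    rw [h2, norm_mul, Complex.norm_real, Real.norm_eq_abs, mul_pow, mul_pow, sq_abs]
    ring
  have hGint : Integrable (fun x => ‖G x‖^2) volume := by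
    rw [funext hGsq]
    exact (iR4.sub (iR5.const_mul _)).add (iR1.const_mul _)
  have hGval : (∫ x, ‖G x‖^2) = varP n hbar ψ j := by
    have e1 : (∫ x : EuclideanSpace ℝ (Fin n),
          (hbar^2 * ‖ψ' x‖^2 - 2*b * ((starRingEnd ℂ) (ψ x) * Pop n hbar ψ j x).re)
            + b^2 * ‖ψ x‖^2)
        = (∫ x : EuclideanSpace ℝ (Fin n),
            hbar^2 * ‖ψ' x‖^2 - 2*b * ((starRingEnd ℂ) (ψ x) * Pop n hbar ψ j x).re)
          + ∫ x : EuclideanSpace ℝ (Fin n), b^2 * ‖ψ x‖^2 :=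
      integral_add (iR4.sub (iR5.const_mul (2*b))) (iR1.const_mul (b^2))
    have e2 : (∫ x : EuclideanSpace ℝ (Fin n),
          hbar^2 * ‖ψ' x‖^2 - 2*b * ((starRingEnd ℂ) (ψ x) * Pop n hbar ψ j x).re)
        = (∫ x : EuclideanSpace ℝ (Fin n), hbar^2 * ‖ψ' x‖^2)
          - ∫ x : EuclideanSpace ℝ (Fin n), 2*b * ((starRingEnd ℂ) (ψ x) * Pop n hbar ψ j x).re :=
      integral_sub iR4 (iR5.const_mul (2*b))
    rw [funext hGsq]
    rw [show (fun x : EuclideanSpace ℝ (Fin n) =>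
        (hbar^2 * ‖ψ' x‖^2 - (2*b) * ((starRingEnd ℂ) (ψ x) * Pop n hbar ψ j x).re)
          + b^2 * ‖ψ x‖^2)
      = fun x : EuclideanSpace ℝ (Fin n) =>
        (hbar^2 * ‖ψ' x‖^2 - 2*b * ((starRingEnd ℂ) (ψ x) * Pop n hbar ψ j x).re)
          + b^2 * ‖ψ x‖^2 from rfl]
    rw [e1, e2, integral_const_mul, integral_const_mul, integral_const_mul, hnorm]
    have hre := integral_re (𝕜 := ℂ) iC1
    simp only [RCLike.re_to_complex] at hre
    rw [hre, hT0re]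
    have hvp : varP n hbar ψ j
        = hbar^2 * (∫ x : EuclideanSpace ℝ (Fin n), ‖ψ' x‖^2) - b^2 := by
      rw [hb]
      have heq : (fun x : EuclideanSpace ℝ (Fin n) =>
          hbar^2 * ‖fderiv ℝ (⇑ψ) x (EuclideanSpace.single j 1)‖^2)
          = fun x : EuclideanSpace ℝ (Fin n) => hbar^2 * ‖ψ' x‖^2 := by
        funext x; rw [← hv, hd x]
      show (∫ x : EuclideanSpace ℝ (Fin n),
          hbar^2 * ‖fderiv ℝ (⇑ψ) x (EuclideanSpace.single j 1)‖^2) - meanP n hbar ψ j ^ 2 = _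
      rw [heq, integral_const_mul]
    rw [hvp]; ring
  -- the inner product
  have hZexp : ∀ x, (starRingEnd ℂ) (F x) * G x =
      (starRingEnd ℂ) (ψ x) * ((x j : ℝ) : ℂ) * Pop n hbar ψ j x
      - (a : ℂ) * ((starRingEnd ℂ) (ψ x) * Pop n hbar ψ j x)
      - (b : ℂ) * ((x j * ‖ψ x‖^2 : ℝ) : ℂ)
      + ((a * b : ℝ) : ℂ) * ((‖ψ x‖^2 : ℝ) : ℂ) := fun x => by
    simp only [hF, hG]
    rw [map_mul, map_sub, Complex.conj_ofReal, Complex.conj_ofReal]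
    have hm : ((‖ψ x‖ : ℂ))^2 = (starRingEnd ℂ) (ψ x) * ψ x := by
      rw [HS_conj_mul_self (ψ x)]; push_cast; ring
    push_cast
    rw [hm]
    ring
  set Z : ℂ := ∫ x : EuclideanSpace ℝ (Fin n), (starRingEnd ℂ) (F x) * G x with hZdef
  have hZval : Z = (∫ x : EuclideanSpace ℝ (Fin n),
        (starRingEnd ℂ) (ψ x) * ((x j : ℝ) : ℂ) * Pop n hbar ψ j x)
      - (a : ℂ) * (∫ x : EuclideanSpace ℝ (Fin n), (starRingEnd ℂ) (ψ x) * Pop n hbar ψ j x)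
      - (b : ℂ) * ((a : ℝ) : ℂ) + ((a * b : ℝ) : ℂ) * ((1 : ℝ) : ℂ) := by
    have e1 : (∫ x : EuclideanSpace ℝ (Fin n),
          ((starRingEnd ℂ) (ψ x) * ((x j : ℝ) : ℂ) * Pop n hbar ψ j x
            - (a : ℂ) * ((starRingEnd ℂ) (ψ x) * Pop n hbar ψ j x)
            - (b : ℂ) * ((x j * ‖ψ x‖^2 : ℝ) : ℂ))
            + ((a * b : ℝ) : ℂ) * ((‖ψ x‖^2 : ℝ) : ℂ))
        = (∫ x : EuclideanSpace ℝ (Fin n),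
            (starRingEnd ℂ) (ψ x) * ((x j : ℝ) : ℂ) * Pop n hbar ψ j x
            - (a : ℂ) * ((starRingEnd ℂ) (ψ x) * Pop n hbar ψ j x)
            - (b : ℂ) * ((x j * ‖ψ x‖^2 : ℝ) : ℂ))
          + ∫ x : EuclideanSpace ℝ (Fin n), ((a * b : ℝ) : ℂ) * ((‖ψ x‖^2 : ℝ) : ℂ) :=
      integral_add ((iC2.sub (iC1.const_mul ((a:ℂ)))).sub ((iR2.ofReal).const_mul ((b:ℂ))))
        ((iR1.ofReal).const_mul _)
    have e2 : (∫ x : EuclideanSpace ℝ (Fin n),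
          (starRingEnd ℂ) (ψ x) * ((x j : ℝ) : ℂ) * Pop n hbar ψ j x
            - (a : ℂ) * ((starRingEnd ℂ) (ψ x) * Pop n hbar ψ j x)
            - (b : ℂ) * ((x j * ‖ψ x‖^2 : ℝ) : ℂ))
        = (∫ x : EuclideanSpace ℝ (Fin n),
            (starRingEnd ℂ) (ψ x) * ((x j : ℝ) : ℂ) * Pop n hbar ψ j x
            - (a : ℂ) * ((starRingEnd ℂ) (ψ x) * Pop n hbar ψ j x))
          - ∫ x : EuclideanSpace ℝ (Fin n), (b : ℂ) * ((x j * ‖ψ x‖^2 : ℝ) : ℂ) :=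
      integral_sub (iC2.sub (iC1.const_mul ((a:ℂ)))) ((iR2.ofReal).const_mul ((b:ℂ)))
    have e3 : (∫ x : EuclideanSpace ℝ (Fin n),
          (starRingEnd ℂ) (ψ x) * ((x j : ℝ) : ℂ) * Pop n hbar ψ j x
            - (a : ℂ) * ((starRingEnd ℂ) (ψ x) * Pop n hbar ψ j x))
        = (∫ x : EuclideanSpace ℝ (Fin n),
            (starRingEnd ℂ) (ψ x) * ((x j : ℝ) : ℂ) * Pop n hbar ψ j x)
          - ∫ x : EuclideanSpace ℝ (Fin n), (a : ℂ) * ((starRingEnd ℂ) (ψ x) * Pop n hbar ψ j x) :=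
      integral_sub iC2 (iC1.const_mul ((a:ℂ)))
    rw [hZdef, funext hZexp, e1, e2, e3,
      integral_const_mul, integral_const_mul, integral_const_mul,
      hOfReal, hOfReal, hmean, hnorm]
  have hZre : Z.re = covXP n hbar ψ j := by
    rw [hZval]
    simp only [Complex.add_re, Complex.sub_re, Complex.mul_re, Complex.ofReal_re,
      Complex.ofReal_im, hT0re, hT1re, hT0im, hT1im]
    ring
  have hZim : Z.im = hbar / 2 := by
    rw [hZval]
    simp only [Complex.add_im, Complex.sub_im, Complex.mul_im, Complex.mul_re,
      Complex.ofReal_re, Complex.ofReal_im, hT0re, hT1re, hT0im, hT1im]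
    ring
  -- Cauchy-Schwarz in L²
  have hFmem : MemLp F 2 volume :=
    (memLp_two_iff_integrable_sq_norm hcF.aestronglyMeasurable).2 hFint
  have hGmem : MemLp G 2 volume :=
    (memLp_two_iff_integrable_sq_norm hcG.aestronglyMeasurable).2 hGint
  have hip : (inner ℂ (hFmem.toLp F) (hGmem.toLp G) : ℂ) = Z := by
    rw [hZdef, L2.inner_def]
    refine integral_congr_ae ?_
    filter_upwards [hFmem.coeFn_toLp, hGmem.coeFn_toLp] with x hx hy
    rw [hx, hy, RCLike.inner_apply']
  have hipF : (inner ℂ (hFmem.toLp F) (hFmem.toLp F) : ℂ) = ((∫ x, ‖F x‖^2 : ℝ) : ℂ) := by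
    calc (inner ℂ (hFmem.toLp F) (hFmem.toLp F) : ℂ)
        = ∫ x, ((‖F x‖^2 : ℝ) : ℂ) := by
          rw [L2.inner_def]
          refine integral_congr_ae ?_
          filter_upwards [hFmem.coeFn_toLp] with x hx
          rw [hx, RCLike.inner_apply', HS_conj_mul_self]
    _ = ((∫ x, ‖F x‖^2 : ℝ) : ℂ) := hOfReal _
  have hipG : (inner ℂ (hGmem.toLp G) (hGmem.toLp G) : ℂ) = ((∫ x, ‖G x‖^2 : ℝ) : ℂ) := by
    calc (inner ℂ (hGmem.toLp G) (hGmem.toLp G) : ℂ)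
        = ∫ x, ((‖G x‖^2 : ℝ) : ℂ) := by
          rw [L2.inner_def]
          refine integral_congr_ae ?_
          filter_upwards [hGmem.coeFn_toLp] with x hx
          rw [hx, RCLike.inner_apply', HS_conj_mul_self]
    _ = ((∫ x, ‖G x‖^2 : ℝ) : ℂ) := hOfReal _
  have hnf : ‖hFmem.toLp F‖^2 = ∫ x, ‖F x‖^2 := by
    rw [norm_sq_eq_re_inner (𝕜 := ℂ) (hFmem.toLp F), hipF]
    simp
  have hng : ‖hGmem.toLp G‖^2 = ∫ x, ‖G x‖^2 := by
    rw [norm_sq_eq_re_inner (𝕜 := ℂ) (hGmem.toLp G), hipG]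
    simp
  have hcs := norm_inner_le_norm (𝕜 := ℂ) (hFmem.toLp F) (hGmem.toLp G)
  rw [hip] at hcs
  have key : ‖Z‖^2 ≤ (∫ x, ‖F x‖^2) * (∫ x, ‖G x‖^2) := by
    calc ‖Z‖^2 ≤ (‖hFmem.toLp F‖ * ‖hGmem.toLp G‖)^2 :=
          pow_le_pow_left₀ (norm_nonneg Z) hcs 2
    _ = (∫ x, ‖F x‖^2) * (∫ x, ‖G x‖^2) := by rw [mul_pow, hnf, hng]
  have habsZ : ‖Z‖^2 = Z.re^2 + Z.im^2 := by
    rw [Complex.sq_norm, Complex.normSq_apply]; ring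
  rw [ge_iff_le]
  calc covXP n hbar ψ j ^ 2 + hbar^2/4 = Z.re^2 + Z.im^2 := by rw [hZre, hZim]; ring
  _ = ‖Z‖^2 := habsZ.symm
  _ ≤ (∫ x, ‖F x‖^2) * (∫ x, ‖G x‖^2) := key
  _ = varX n ψ j * varP n hbar ψ j := by rw [hFval, hGval]
end

section
/- Let ħ > 0 and let Σ be a real symmetric 2n×2n matrix. If the complex Hermitian matrix Σ + (iħ/2)J is positive semidefinite, where J = [[0, I_n],[−I_n, 0]] is the standard symplectic matrix, then Σ is positive definite. -/
open Matrix
open scoped ComplexOrder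

/-- The standard symplectic matrix `J = [[0, Iₙ], [-Iₙ, 0]]`, with rows/columns indexed by
`Fin n ⊕ Fin n` (positions first, momenta second). -/
def Jmat (n : ℕ) : Matrix (Fin n ⊕ Fin n) (Fin n ⊕ Fin n) ℝ :=
  Matrix.fromBlocks 0 1 (-1) 0

lemma Jmat_transpose (n : ℕ) : (Jmat n)ᵀ = -(Jmat n) := by
  simp [Jmat, Matrix.fromBlocks_transpose, Matrix.fromBlocks_neg]

lemma Jmat_mul_Jmat (n : ℕ) : Jmat n * Jmat n = -1 := by
  simp [Jmat, Matrix.fromBlocks_multiply, ← Matrix.fromBlocks_one, Matrix.fromBlocks_neg]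

lemma Jmat_antisym (n : ℕ) (u v : Fin n ⊕ Fin n → ℝ) :
    v ⬝ᵥ (Jmat n) *ᵥ u = -(u ⬝ᵥ (Jmat n) *ᵥ v) := by
  rw [Matrix.dotProduct_mulVec, ← Matrix.mulVec_transpose, Jmat_transpose,
    Matrix.neg_mulVec, neg_dotProduct, dotProduct_comm]

lemma re_quad (n : ℕ) (hbar : ℝ) (Sig : Matrix (Fin n ⊕ Fin n) (Fin n ⊕ Fin n) ℝ)
    (u v : Fin n ⊕ Fin n → ℝ) :
    ((star (fun i => (u i : ℂ) + (v i : ℂ) * Complex.I)) ⬝ᵥ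
      ((Sig.map Complex.ofReal + (((hbar:ℂ)/2) * Complex.I) • (Jmat n).map Complex.ofReal) *ᵥ
        (fun i => (u i : ℂ) + (v i : ℂ) * Complex.I))).re
    = u ⬝ᵥ Sig *ᵥ u + v ⬝ᵥ Sig *ᵥ v
      - (hbar/2) * (u ⬝ᵥ (Jmat n) *ᵥ v) + (hbar/2) * (v ⬝ᵥ (Jmat n) *ᵥ u) := by
  simp only [dotProduct, mulVec, Pi.star_apply, Matrix.add_apply, Matrix.smul_apply,
    Matrix.map_apply, smul_eq_mul, Finset.mul_sum, Complex.re_sum, Finset.sum_sub_distrib,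
    ← Finset.sum_add_distrib]
  rw [← Finset.sum_sub_distrib, ← Finset.sum_add_distrib]
  refine Finset.sum_congr rfl fun i _ => ?_
  rw [← Finset.sum_sub_distrib, ← Finset.sum_add_distrib]
  refine Finset.sum_congr rfl fun j _ => ?_
  simp [Complex.ext_iff, Complex.mul_re, Complex.mul_im, Complex.add_re, Complex.add_im,
    Complex.div_re, Complex.div_im, Complex.normSq]
  ring


/-- If the complex Hermitian matrix `Σ + (iħ/2)J` is positive semidefinite, then the real
symmetric matrix `Σ` is positive definite. -/
theorem posdef_of_quantum_condition (n : ℕ) (hbar : ℝ) (hbar_pos : 0 < hbar)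
    (Sig : Matrix (Fin n ⊕ Fin n) (Fin n ⊕ Fin n) ℝ) (hSig : Sig.IsSymm)
    (h : (Sig.map Complex.ofReal +
        (((hbar : ℂ) / 2) * Complex.I) • (Jmat n).map Complex.ofReal).PosSemidef) :
    Sig.PosDef := by
  -- key inequality
  have key : ∀ u v : Fin n ⊕ Fin n → ℝ,
      hbar * (u ⬝ᵥ (Jmat n) *ᵥ v) ≤ u ⬝ᵥ Sig *ᵥ u + v ⬝ᵥ Sig *ᵥ v := by
    intro u v
    have hz := h.dotProduct_mulVec_nonneg (fun i => (u i : ℂ) + (v i : ℂ) * Complex.I)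
    rw [Complex.le_def] at hz
    have hre := hz.1
    rw [re_quad n hbar Sig u v] at hre
    simp only [Complex.zero_re] at hre
    rw [Jmat_antisym n u v] at hre
    linarith
  have hPSD : ∀ u : Fin n ⊕ Fin n → ℝ, 0 ≤ u ⬝ᵥ Sig *ᵥ u := by
    intro u
    have := key u 0
    simpa using this
  refine posDef_iff_dotProduct_mulVec.mpr ⟨?_, ?_⟩
  · exact hSig
  · intro x hx
    simp only [star_trivial]
    set y := (Jmat n) *ᵥ x with hy
    have hyx : (Jmat n) *ᵥ y = -x := by
      rw [hy, Matrix.mulVec_mulVec, Jmat_mul_Jmat]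
      simp [Matrix.neg_mulVec]
    have hyne : y ≠ 0 := by
      intro h0
      apply hx
      have : (Jmat n) *ᵥ y = 0 := by rw [h0]; simp
      rw [hyx] at this
      simpa using this
    set m := y ⬝ᵥ y with hm
    have hmnn : 0 ≤ m := Finset.sum_nonneg fun i _ => mul_self_nonneg _
    have hmpos : 0 < m :=
      hmnn.lt_of_ne (Ne.symm fun e => hyne (dotProduct_self_eq_zero.mp e))
    set c := y ⬝ᵥ Sig *ᵥ y with hc
    have hcnn : 0 ≤ c := hPSD y
    set d := x ⬝ᵥ Sig *ᵥ x with hd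
    have hdnn : 0 ≤ d := hPSD x
    rcases hdnn.lt_or_eq with h' | h'
    · exact h'
    exfalso
    -- d = 0; use test vector t • y against x
    set t := hbar * m / (c + 1) with ht
    have hc1 : (0:ℝ) < c + 1 := by linarith
    have htpos : 0 < t := div_pos (mul_pos hbar_pos hmpos) hc1
    have hkey := key (t • y) x
    rw [smul_dotProduct, smul_dotProduct, Matrix.mulVec_smul,
      dotProduct_smul] at hkey
    -- hkey : hbar * (t * (y ⬝ᵥ J *ᵥ x)) ≤ t * (t * c) + d
    simp only [smul_eq_mul, add_zero] at hkey
    have hyJx : y ⬝ᵥ (Jmat n) *ᵥ x = m := by rw [hm, hy]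
    rw [hyJx, ← hc, ← hd, ← h'] at hkey
    -- hbar * (t * m) ≤ t * (t * c)
    have htc : t * c < hbar * m := by
      rw [ht, div_mul_eq_mul_div, div_lt_iff₀ hc1]
      nlinarith [mul_pos hbar_pos hmpos]
    nlinarith [mul_lt_mul_of_pos_left htc htpos]
end

section
/- Let ħ > 0 and let Σ be a real symmetric positive-definite 2n×2n matrix. The eigenvalues of JΣ are ±iλ_j with λ_j > 0 (j = 1,…,n); these λ_j form the symplectic spectrum of Σ. Then the complex Hermitian matrix Σ + (iħ/2)J is positive semidefinite if and only if λ_j ≥ ħ/2 for every j (equivalently, if and only if the smallest symplectic eigenvalue of Σ is at least ħ/2, i.e. the symplectic capacity c(W_Σ) = 2π·λ_min of the Wigner ellipsoid W_Σ : (1/2)Σ⁻¹z·z ≤ 1 satisfies c(W_Σ) ≥ (1/2)h = πħ). -/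
open Matrix Polynomial
open scoped ComplexOrder

namespace QuantumAux

noncomputable section

/-- Complexified symplectic matrix. -/
abbrev Jc (n : ℕ) : Matrix (Fin n ⊕ Fin n) (Fin n ⊕ Fin n) ℂ :=
  (Jmat n).map Complex.ofReal

lemma Jmat_mul_self (n : ℕ) : Jmat n * Jmat n = -1 := by
  rw [Jmat, Matrix.fromBlocks_multiply]
  ext (i | i) (j | j) <;>
    simp [Matrix.fromBlocks_apply₁₁, Matrix.fromBlocks_apply₁₂, Matrix.fromBlocks_apply₂₁,
      Matrix.fromBlocks_apply₂₂, Matrix.one_apply, Matrix.neg_apply]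

lemma Jmat_transpose (n : ℕ) : (Jmat n)ᵀ = -Jmat n := by
  ext (i | i) (j | j) <;>
    simp [Jmat, Matrix.transpose_apply, Matrix.fromBlocks_apply₁₁, Matrix.fromBlocks_apply₁₂,
      Matrix.fromBlocks_apply₂₁, Matrix.fromBlocks_apply₂₂, Matrix.one_apply,
      Matrix.neg_apply, eq_comm]

lemma map_real_conjTranspose {m : Type*} (A : Matrix m m ℝ) :
    (A.map Complex.ofReal)ᴴ = Aᵀ.map Complex.ofReal := by
  ext i j
  simp [Matrix.conjTranspose_apply, Complex.conj_ofReal]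

lemma Jc_conjTranspose (n : ℕ) : (Jc n)ᴴ = -(Jc n) := by
  rw [map_real_conjTranspose, Jmat_transpose]
  ext i j
  simp

lemma map_ofReal_mul {m : Type*} [Fintype m] (A B : Matrix m m ℝ) :
    (A * B).map Complex.ofReal = A.map Complex.ofReal * B.map Complex.ofReal :=
  Matrix.map_mul (f := Complex.ofRealHom)

lemma Jc_mul_self (n : ℕ) : Jc n * Jc n = -1 := by
  rw [Jc, ← map_ofReal_mul, Jmat_mul_self]
  ext i j
  simp [Matrix.map_apply, Matrix.neg_apply, Matrix.one_apply, apply_ite]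

lemma Jc_det_ne_zero (n : ℕ) : (Jc n).det ≠ 0 := by
  have h : Jc n * (-(Jc n)) = 1 := by
    rw [Matrix.mul_neg, Jc_mul_self, neg_neg]
  have hdet : (Jc n).det * (-(Jc n)).det = 1 := by
    rw [← Matrix.det_mul, h, Matrix.det_one]
  exact left_ne_zero_of_mul_eq_one hdet

/-- The quadratic form of a Hermitian matrix is real-valued. -/
lemma quad_im_eq_zero {m : Type*} [Fintype m] {H : Matrix m m ℂ}
    (hH : H.IsHermitian) (v : m → ℂ) : (star v ⬝ᵥ (H *ᵥ v)).im = 0 := by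
  have key : star (star v ⬝ᵥ (H *ᵥ v)) = star v ⬝ᵥ (H *ᵥ v) := by
    calc star (star v ⬝ᵥ (H *ᵥ v)) = star (H *ᵥ v) ⬝ᵥ star (star v) := by
            rw [Matrix.star_dotProduct_star]
      _ = (star v ᵥ* Hᴴ) ⬝ᵥ v := by rw [Matrix.star_mulVec, star_star]
      _ = star v ⬝ᵥ (Hᴴ *ᵥ v) := (Matrix.dotProduct_mulVec _ _ _).symm
      _ = star v ⬝ᵥ (H *ᵥ v) := by rw [hH.eq]
  exact Complex.conj_eq_iff_im.mp key

/-- Casts interact with quadratic forms. -/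
lemma dot_cast {m : Type*} [Fintype m] (S : Matrix m m ℝ) (u w : m → ℝ) :
    (fun k => ((u k : ℝ) : ℂ)) ⬝ᵥ (S.map Complex.ofReal *ᵥ fun k => ((w k : ℝ) : ℂ))
      = ((u ⬝ᵥ (S *ᵥ w) : ℝ) : ℂ) := by
  simp only [dotProduct, Matrix.mulVec, Matrix.map_apply]
  push_cast
  rfl

/-- Complexification of a real positive definite symmetric matrix is positive definite. -/
lemma posDef_complexify {m : Type*} [Fintype m] {S : Matrix m m ℝ}
    (hs : S.IsSymm) (h : S.PosDef) : (S.map Complex.ofReal).PosDef := by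
  have hherm : (S.map Complex.ofReal).IsHermitian := by
    rw [Matrix.IsHermitian, map_real_conjTranspose, hs.eq]
  refine Matrix.PosDef.of_dotProduct_mulVec_pos hherm (fun v hv => ?_)
  set x : m → ℝ := fun k => (v k).re with hx
  set y : m → ℝ := fun k => (v k).im with hy
  have hvdec : v = (fun k => ((x k : ℝ) : ℂ)) + Complex.I • (fun k => ((y k : ℝ) : ℂ)) := by
    funext k
    simp [hx, hy, Complex.ext_iff]
  have hstar : star v = (fun k => ((x k : ℝ) : ℂ)) - Complex.I • (fun k => ((y k : ℝ) : ℂ)) := by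
    funext k
    simp [hx, hy, Complex.ext_iff, Complex.conj_re, Complex.conj_im]
  have hsymm : x ⬝ᵥ (S *ᵥ y) = y ⬝ᵥ (S *ᵥ x) := by
    calc x ⬝ᵥ (S *ᵥ y) = (x ᵥ* S) ⬝ᵥ y := Matrix.dotProduct_mulVec _ _ _
      _ = (S *ᵥ x) ⬝ᵥ y := by rw [← Matrix.vecMul_transpose, hs.eq]
      _ = y ⬝ᵥ (S *ᵥ x) := dotProduct_comm _ _
  have hval : star v ⬝ᵥ (S.map Complex.ofReal *ᵥ v)
      = ((x ⬝ᵥ (S *ᵥ x) + y ⬝ᵥ (S *ᵥ y) : ℝ) : ℂ) := by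
    conv_lhs => rw [hstar, hvdec]
    simp only [Matrix.mulVec_add, Matrix.mulVec_smul, sub_dotProduct,
      dotProduct_add, smul_dotProduct, dotProduct_smul,
      smul_eq_mul, dot_cast S x x, dot_cast S x y, dot_cast S y x, dot_cast S y y]
    rw [hsymm]
    push_cast
    linear_combination (-((y ⬝ᵥ (S *ᵥ y) : ℝ) : ℂ)) * Complex.I_sq
  have hxy : x ≠ 0 ∨ y ≠ 0 := by
    by_contra hc
    push_neg at hc
    apply hv
    funext k
    have h1 := congrFun hc.1 k
    have h2 := congrFun hc.2 k
    simp only [hx, hy, Pi.zero_apply] at h1 h2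
    exact Complex.ext h1 h2
  have hpos : 0 < x ⬝ᵥ (S *ᵥ x) + y ⬝ᵥ (S *ᵥ y) := by
    rcases hxy with hx0 | hy0
    · have h1 : 0 < x ⬝ᵥ (S *ᵥ x) := by simpa using h.dotProduct_mulVec_pos hx0
      have h2 : 0 ≤ y ⬝ᵥ (S *ᵥ y) := by simpa using h.posSemidef.dotProduct_mulVec_nonneg y
      linarith
    · have h1 : 0 ≤ x ⬝ᵥ (S *ᵥ x) := by simpa using h.posSemidef.dotProduct_mulVec_nonneg x
      have h2 : 0 < y ⬝ᵥ (S *ᵥ y) := by simpa using h.dotProduct_mulVec_pos hy0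
      linarith
  rw [hval]
  exact Complex.zero_lt_real.mpr hpos

/-- Evaluating the characteristic polynomial gives a determinant. -/
lemma eval_charpoly_det {m : Type*} [Fintype m] [DecidableEq m] {R : Type*} [CommRing R]
    (M : Matrix m m R) (r : R) :
    M.charpoly.eval r = (Matrix.scalar m r - M).det := by
  rw [Matrix.charpoly, _root_.eval_det, matPolyEquiv_charmatrix]
  simp

/-- Spectral-gap lemma: a PSD matrix with nonzero determinant dominates `ε • 1`. -/
lemma gap {m : Type*} [Fintype m] [DecidableEq m] {M : Matrix m m ℂ}
    (hM : M.PosSemidef) (hdet : M.det ≠ 0) :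
    ∃ ε : ℝ, 0 < ε ∧ (M - (ε : ℂ) • 1).PosSemidef := by
  cases isEmpty_or_nonempty m with
  | inl hempty =>
    refine ⟨1, one_pos, ?_⟩
    refine Matrix.PosSemidef.of_dotProduct_mulVec_nonneg ?_ ?_
    · ext i j
      exact (IsEmpty.false i).elim
    · intro v
      simp [dotProduct]
  | inr hne =>
    have hH := hM.isHermitian
    set μ := hH.eigenvalues with hμ
    have hpos : ∀ i, 0 < μ i := by
      intro i
      rcases lt_or_eq_of_le (hM.eigenvalues_nonneg i) with hlt | heq
      · exact hlt
      · exfalso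
        apply hdet
        rw [hH.det_eq_prod_eigenvalues]
        exact Finset.prod_eq_zero (Finset.mem_univ i) (by rw [← heq]; simp)
    set ε := Finset.univ.inf' Finset.univ_nonempty μ with hε
    have hεpos : 0 < ε := by
      rw [hε, Finset.lt_inf'_iff]
      exact fun i _ => hpos i
    refine ⟨ε, hεpos, ?_⟩
    set U : Matrix m m ℂ := (hH.eigenvectorUnitary : Matrix m m ℂ) with hU
    have hUU : U * star U = 1 := hH.eigenvectorUnitary.2.2
    have hd : ((ε : ℂ) • (1 : Matrix m m ℂ)) = Matrix.diagonal (fun _ : m => (ε : ℂ)) := by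
      ext i j
      by_cases hij : i = j <;>
        simp [Matrix.smul_apply, Matrix.one_apply, Matrix.diagonal_apply, hij]
    have h1 : ((ε : ℂ) • (1 : Matrix m m ℂ))
        = U * Matrix.diagonal (fun _ : m => (ε : ℂ)) * star U := by
      rw [← hd, Matrix.mul_smul, Matrix.smul_mul, Matrix.mul_one, hUU]
    have hcast : ∀ r : ℝ, (RCLike.ofReal r : ℂ) = ((r : ℝ) : ℂ) := fun r => rfl
    have key : M - (ε : ℂ) • 1
        = U * Matrix.diagonal (fun i => ((μ i - ε : ℝ) : ℂ)) * star U := by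
      conv_lhs => rw [hH.spectral_theorem, h1]
      rw [Unitary.conjStarAlgAut_apply, ← hU]
      rw [← Matrix.sub_mul, ← Matrix.mul_sub, Matrix.diagonal_sub]
      congr 2
      funext i
      simp [Function.comp, Complex.ofReal_sub]
      rfl
    have hdiag : (Matrix.diagonal (fun i => ((μ i - ε : ℝ) : ℂ))).PosSemidef := by
      refine Matrix.PosSemidef.diagonal (fun i => ?_)
      show (0 : ℂ) ≤ ((μ i - ε : ℝ) : ℂ)
      rw [Complex.zero_le_real, sub_nonneg, hε]
      exact Finset.inf'_le μ (Finset.mem_univ i)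
    rw [key]
    have hps := hdiag.mul_mul_conjTranspose_same U
    rwa [← Matrix.star_eq_conjTranspose] at hps

/-- `ε • 1 + (t i) • J` is PSD for `0 ≤ t ≤ ε`. -/
lemma shift_psd (n : ℕ) (ε t : ℝ) (h0 : 0 ≤ t) (hts : t ≤ ε) :
    ((ε : ℂ) • (1 : Matrix (Fin n ⊕ Fin n) (Fin n ⊕ Fin n) ℂ)
      + ((t : ℂ) * Complex.I) • Jc n).PosSemidef := by
  set a : ℝ := (Real.sqrt (ε + t) + Real.sqrt (ε - t)) / 2 with ha
  set b : ℝ := (Real.sqrt (ε + t) - Real.sqrt (ε - t)) / 2 with hb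
  have hx : Real.sqrt (ε + t) ^ 2 = ε + t := Real.sq_sqrt (by linarith)
  have hy : Real.sqrt (ε - t) ^ 2 = ε - t := Real.sq_sqrt (by linarith)
  have hab1 : a ^ 2 + b ^ 2 = ε := by
    rw [ha, hb]; nlinarith [hx, hy]
  have hab2 : 2 * (a * b) = t := by
    rw [ha, hb]; nlinarith [hx, hy]
  set X : Matrix (Fin n ⊕ Fin n) (Fin n ⊕ Fin n) ℂ :=
    (a : ℂ) • 1 + ((b : ℂ) * Complex.I) • Jc n with hX
  have hXH : Xᴴ = X := by
    rw [hX, Matrix.conjTranspose_add, Matrix.conjTranspose_smul,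
      Matrix.conjTranspose_smul, Matrix.conjTranspose_one, Jc_conjTranspose]
    simp [Complex.conj_ofReal, smul_neg]
  have hab1c : (a : ℂ) ^ 2 + (b : ℂ) ^ 2 = (ε : ℂ) := by exact_mod_cast congrArg Complex.ofReal hab1
  have hab2c : 2 * ((a : ℂ) * (b : ℂ)) = (t : ℂ) := by exact_mod_cast congrArg Complex.ofReal hab2
  have hXX : Xᴴ * X = (ε : ℂ) • 1 + ((t : ℂ) * Complex.I) • Jc n := by
    rw [hXH, hX]
    simp only [Matrix.add_mul, Matrix.mul_add, Matrix.smul_mul, Matrix.mul_smul,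
      Matrix.one_mul, Matrix.mul_one, Jc_mul_self, smul_smul, smul_neg]
    match_scalars
    · linear_combination hab1c - (b : ℂ) ^ 2 * Complex.I_sq
    · linear_combination Complex.I * hab2c
  have hpsd := Matrix.posSemidef_conjTranspose_mul_self X
  rwa [hXX] at hpsd


/-- The matrix `Σ_ℂ + (s i)·J_ℂ`. -/
def Nmat (n : ℕ) (Sig : Matrix (Fin n ⊕ Fin n) (Fin n ⊕ Fin n) ℝ) (s : ℝ) :
    Matrix (Fin n ⊕ Fin n) (Fin n ⊕ Fin n) ℂ :=
  Sig.map Complex.ofReal + ((s : ℂ) * Complex.I) • Jc n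

lemma Nmat_isHermitian (n : ℕ) (Sig : Matrix (Fin n ⊕ Fin n) (Fin n ⊕ Fin n) ℝ)
    (hSig : Sig.IsSymm) (s : ℝ) : (Nmat n Sig s).IsHermitian := by
  have hstar : star ((s : ℂ) * Complex.I) = -((s : ℂ) * Complex.I) := by
    rw [star_mul']
    rw [RCLike.star_def, Complex.conj_I, Complex.conj_ofReal]
    ring
  show _ᴴ = _
  rw [Nmat, Matrix.conjTranspose_add, Matrix.conjTranspose_smul, map_real_conjTranspose,
    hSig.eq, Jc_conjTranspose, hstar, neg_smul, smul_neg, neg_neg]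

lemma iJc_isHermitian (n : ℕ) : (Complex.I • Jc n).IsHermitian := by
  show _ᴴ = _
  rw [Matrix.conjTranspose_smul, Jc_conjTranspose, RCLike.star_def, Complex.conj_I,
    neg_smul, smul_neg, neg_neg]

lemma quad_decomp (n : ℕ) (Sig : Matrix (Fin n ⊕ Fin n) (Fin n ⊕ Fin n) ℝ) (s : ℝ)
    (v : Fin n ⊕ Fin n → ℂ) :
    star v ⬝ᵥ (Nmat n Sig s *ᵥ v)
      = star v ⬝ᵥ (Sig.map Complex.ofReal *ᵥ v)
        + (s : ℂ) * (star v ⬝ᵥ ((Complex.I • Jc n) *ᵥ v)) := by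
  rw [Nmat, Matrix.add_mulVec, dotProduct_add]
  congr 1
  rw [show ((s : ℂ) * Complex.I) • Jc n = (s : ℂ) • (Complex.I • Jc n) from (smul_smul _ _ _).symm,
    Matrix.smul_mulVec, dotProduct_smul, smul_eq_mul]

lemma smul_one_eq_scalar {m : Type*} [Fintype m] [DecidableEq m] (c : ℂ) :
    c • (1 : Matrix m m ℂ) = Matrix.scalar m c := by
  ext i j
  by_cases hij : i = j <;>
    simp [Matrix.scalar_apply, Matrix.smul_apply, Matrix.one_apply, Matrix.diagonal_apply, hij]

lemma charpoly_map_ofReal {m : Type*} [Fintype m] [DecidableEq m] (M : Matrix m m ℝ) :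
    (M.map Complex.ofReal).charpoly = M.charpoly.map Complex.ofRealHom := by
  have h : M.map Complex.ofReal = M.map Complex.ofRealHom := by
    ext i j
    simp
  rw [h, Matrix.charpoly_map]

lemma det_Nmat_eq_zero_iff (n : ℕ) (Sig : Matrix (Fin n ⊕ Fin n) (Fin n ⊕ Fin n) ℝ)
    (lam : Fin n → ℝ)
    (hspec : (Jmat n * Sig).charpoly = ∏ j : Fin n, (X ^ 2 + C (lam j ^ 2))) (s : ℝ) :
    (Nmat n Sig s).det = 0 ↔ ∃ j, lam j ^ 2 = s ^ 2 := by
  have hJN : Jc n * Nmat n Sig s = ((Jmat n * Sig).map Complex.ofReal)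
      - ((s : ℂ) * Complex.I) • 1 := by
    rw [Nmat, Matrix.mul_add, Matrix.mul_smul, Jc_mul_self, smul_neg, ← map_ofReal_mul,
      ← sub_eq_add_neg]
  have h1 : (Nmat n Sig s).det = 0 ↔ (Jc n * Nmat n Sig s).det = 0 := by
    rw [Matrix.det_mul, mul_eq_zero]
    exact ⟨Or.inr, fun h => h.resolve_left (Jc_det_ne_zero n)⟩
  have card2 : Even (Fintype.card (Fin n ⊕ Fin n)) := by
    rw [Fintype.card_sum, Fintype.card_fin]
    exact ⟨n, rfl⟩
  have hdet2 : (Jc n * Nmat n Sig s).det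
      = ((Jmat n * Sig).charpoly.map Complex.ofRealHom).eval ((s : ℂ) * Complex.I) := by
    rw [hJN]
    have hneg : ((Jmat n * Sig).map Complex.ofReal) - ((s : ℂ) * Complex.I) • 1
        = -(Matrix.scalar _ ((s : ℂ) * Complex.I) - (Jmat n * Sig).map Complex.ofReal) := by
      rw [neg_sub, smul_one_eq_scalar]
    rw [hneg, Matrix.det_neg, card2.neg_one_pow, one_mul, ← eval_charpoly_det,
      charpoly_map_ofReal]
  have hfac : ∀ j : Fin n, Polynomial.eval₂ Complex.ofRealHom ((s : ℂ) * Complex.I)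
      (X ^ 2 + C (lam j ^ 2)) = ((lam j ^ 2 : ℝ) : ℂ) - ((s ^ 2 : ℝ) : ℂ) := by
    intro j
    rw [Polynomial.eval₂_add, Polynomial.eval₂_pow, Polynomial.eval₂_X, Polynomial.eval₂_C]
    rw [mul_pow, Complex.I_sq]
    push_cast [Complex.ofRealHom_eq_coe]
    ring
  rw [h1, hdet2, hspec, Polynomial.eval_map, Polynomial.eval₂_finset_prod]
  simp only [hfac]
  rw [Finset.prod_eq_zero_iff]
  constructor
  · rintro ⟨j, -, hj⟩
    rw [sub_eq_zero] at hj
    exact ⟨j, by exact_mod_cast hj⟩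
  · rintro ⟨j, hj⟩
    exact ⟨j, Finset.mem_univ j, by rw [sub_eq_zero]; exact_mod_cast hj⟩

end

end QuantumAux

/-- For a real symmetric positive-definite `Σ` with symplectic spectrum `(λ_j)` (i.e. the
eigenvalues of `JΣ` are `±iλ_j`, `λ_j > 0`, which is encoded by the characteristic polynomial
of `JΣ` being `∏ (X² + λ_j²)`), the Hermitian matrix `Σ + (iħ/2)J` is positive semidefinite
if and only if `λ_j ≥ ħ/2` for every `j`. -/
theorem quantum_condition_iff_symplectic_spectrum (n : ℕ) (hbar : ℝ) (hbar_pos : 0 < hbar)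
    (Sig : Matrix (Fin n ⊕ Fin n) (Fin n ⊕ Fin n) ℝ) (hSig : Sig.IsSymm) (hpos : Sig.PosDef)
    (lam : Fin n → ℝ) (hlam : ∀ j, 0 < lam j)
    (hspec : (Jmat n * Sig).charpoly = ∏ j : Fin n, (X ^ 2 + C (lam j ^ 2))) :
    (Sig.map Complex.ofReal +
        (((hbar : ℂ) / 2) * Complex.I) • (Jmat n).map Complex.ofReal).PosSemidef ↔
      ∀ j, hbar / 2 ≤ lam j := by
  classical
  have hmatch : Sig.map Complex.ofReal
      + (((hbar : ℂ) / 2) * Complex.I) • (Jmat n).map Complex.ofReal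
      = QuantumAux.Nmat n Sig (hbar / 2) := by
    rw [QuantumAux.Nmat]
    congr 2
    push_cast
    ring
  rw [hmatch]
  have hSigPD : (Sig.map Complex.ofReal).PosDef := QuantumAux.posDef_complexify hSig hpos
  have hherm : ∀ s : ℝ, (QuantumAux.Nmat n Sig s).IsHermitian :=
    fun s => QuantumAux.Nmat_isHermitian n Sig hSig s
  have hdetiff : ∀ s : ℝ, (QuantumAux.Nmat n Sig s).det = 0 ↔ ∃ j, lam j ^ 2 = s ^ 2 :=
    fun s => QuantumAux.det_Nmat_eq_zero_iff n Sig lam hspec s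
  constructor
  · -- PSD implies all symplectic eigenvalues are at least ħ/2
    intro hPSD j
    by_contra hlt
    push_neg at hlt
    have hdet0 : (QuantumAux.Nmat n Sig (lam j)).det = 0 := (hdetiff (lam j)).mpr ⟨j, rfl⟩
    obtain ⟨v, hv0, hker⟩ := Matrix.exists_mulVec_eq_zero_iff.mpr hdet0
    have hq0 := QuantumAux.quad_decomp n Sig (lam j) v
    rw [hker, dotProduct_zero] at hq0
    set A := star v ⬝ᵥ (Sig.map Complex.ofReal *ᵥ v) with hA
    set Bq := star v ⬝ᵥ ((Complex.I • QuantumAux.Jc n) *ᵥ v) with hB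
    have hApos : 0 < A := hSigPD.dotProduct_mulVec_pos hv0
    have hARe : 0 < A.re := ((Complex.lt_def).mp hApos).1
    have hBim : Bq.im = 0 := QuantumAux.quad_im_eq_zero (QuantumAux.iJc_isHermitian n) v
    have hre0 : A.re + lam j * Bq.re = 0 := by
      have hcr := congrArg Complex.re hq0
      simpa [Complex.add_re, Complex.mul_re, Complex.ofReal_re, Complex.ofReal_im, hBim]
        using hcr.symm
    have hq2 := hPSD.dotProduct_mulVec_nonneg v
    rw [QuantumAux.quad_decomp n Sig (hbar / 2) v, ← hA, ← hB] at hq2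
    have hre2 : 0 ≤ A.re + (hbar / 2) * Bq.re := by
      have h3 := (Complex.le_def).mp hq2
      simpa [Complex.add_re, Complex.mul_re, Complex.ofReal_re, Complex.ofReal_im, hBim]
        using h3.1
    have hlj := hlam j
    have hkey : 0 ≤ (A.re + (hbar / 2) * Bq.re) * lam j := mul_nonneg hre2 hlj.le
    have hre0' : (A.re + lam j * Bq.re) * (hbar / 2) = 0 := by rw [hre0]; ring
    nlinarith [hkey, hre0', hre0, hARe, hlt, hlj, mul_pos hARe (sub_pos.mpr hlt)]
  · -- all symplectic eigenvalues at least ħ/2 implies PSD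
    intro hlamge
    by_contra hbad
    set Bset : Set ℝ := {s : ℝ | 0 ≤ s ∧ s ≤ hbar / 2 ∧ ¬ (QuantumAux.Nmat n Sig s).PosSemidef}
      with hBset
    have hmem : hbar / 2 ∈ Bset := ⟨by linarith, le_refl _, hbad⟩
    have hBne : Bset.Nonempty := ⟨_, hmem⟩
    have hbdd : BddBelow Bset := ⟨0, fun z hz => hz.1⟩
    set s0 := sInf Bset with hs0
    have hs0_nonneg : 0 ≤ s0 := le_csInf hBne fun z hz => hz.1
    have hs0_le : s0 ≤ hbar / 2 := csInf_le hbdd hmem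
    have hbelow : ∀ s : ℝ, 0 ≤ s → s < s0 → (QuantumAux.Nmat n Sig s).PosSemidef := by
      intro s h0 hslt
      by_contra hns
      have hsB : s ∈ Bset := ⟨h0, by linarith, hns⟩
      exact absurd (csInf_le hbdd hsB) (not_le.mpr hslt)
    have hs0PSD : (QuantumAux.Nmat n Sig s0).PosSemidef := by
      rcases eq_or_lt_of_le hs0_nonneg with h0 | h0
      · have hN0 : QuantumAux.Nmat n Sig s0 = Sig.map Complex.ofReal := by
          rw [QuantumAux.Nmat, ← h0]
          simp
        rw [hN0]
        exact hSigPD.posSemidef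
      · refine Matrix.PosSemidef.of_dotProduct_mulVec_nonneg (hherm _) (fun v => ?_)
        set A := star v ⬝ᵥ (Sig.map Complex.ofReal *ᵥ v) with hA
        set Bq := star v ⬝ᵥ ((Complex.I • QuantumAux.Jc n) *ᵥ v) with hB
        have hAim : A.im = 0 := QuantumAux.quad_im_eq_zero hSigPD.1 v
        have hBim : Bq.im = 0 := QuantumAux.quad_im_eq_zero (QuantumAux.iJc_isHermitian n) v
        have hlow : ∀ s : ℝ, 0 ≤ s → s < s0 → 0 ≤ A.re + s * Bq.re := by
          intro s h1 h2
          have h3 := (hbelow s h1 h2).dotProduct_mulVec_nonneg v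
          rw [QuantumAux.quad_decomp n Sig s v, ← hA, ← hB] at h3
          have h4 := (Complex.le_def).mp h3
          simpa [Complex.add_re, Complex.mul_re, Complex.ofReal_re, Complex.ofReal_im, hBim]
            using h4.1
        have hre : 0 ≤ A.re + s0 * Bq.re := by
          by_contra hneg
          push_neg at hneg
          set c := A.re + s0 * Bq.re with hc
          have hcneg : c < 0 := hneg
          set δ := min (s0 / 2) (-c / (2 * (|Bq.re| + 1))) with hδ
          have hδpos : 0 < δ := lt_min (by linarith) (div_pos (by linarith) (by positivity))
          have hδ1 : δ ≤ s0 / 2 := min_le_left _ _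
          have hδ2 : δ ≤ -c / (2 * (|Bq.re| + 1)) := min_le_right _ _
          have h4 := hlow (s0 - δ) (by linarith) (by linarith)
          have habs : -Bq.re ≤ |Bq.re| := neg_le_abs _
          have habs2 : Bq.re ≤ |Bq.re| := le_abs_self _
          have habs0 : 0 ≤ |Bq.re| := abs_nonneg _
          have hd2 : δ * (2 * (|Bq.re| + 1)) ≤ -c := by
            rw [← le_div_iff₀ (by positivity)]
            exact hδ2
          nlinarith [h4, hd2, hδpos, habs, habs2, habs0,
            mul_le_mul_of_nonneg_left habs hδpos.le]
        rw [QuantumAux.quad_decomp n Sig s0 v, ← hA, ← hB, Complex.le_def]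
        constructor
        · simpa [Complex.add_re, Complex.mul_re, Complex.ofReal_re, Complex.ofReal_im, hBim]
            using hre
        · simp [Complex.add_im, Complex.mul_im, Complex.ofReal_re, Complex.ofReal_im, hBim, hAim]
    have hs0lt : s0 < hbar / 2 := by
      rcases lt_or_eq_of_le hs0_le with h | h
      · exact h
      · rw [h] at hs0PSD
        exact absurd hs0PSD hbad
    have hdetne : (QuantumAux.Nmat n Sig s0).det ≠ 0 := by
      intro hz
      obtain ⟨j, hj⟩ := (hdetiff s0).mp hz
      have heq : lam j = s0 := (sq_eq_sq₀ (hlam j).le hs0_nonneg).mp hj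
      have := hlamge j
      linarith
    obtain ⟨ε, hεpos, hgap⟩ := QuantumAux.gap hs0PSD hdetne
    obtain ⟨z, hzB, hzlt⟩ := (csInf_lt_iff hbdd hBne).mp
      (show sInf Bset < s0 + ε by rw [← hs0]; linarith)
    have hzge : s0 ≤ z := csInf_le hbdd hzB
    set t := z - s0 with ht
    have hz' : (z : ℂ) = (s0 : ℂ) + (t : ℂ) := by
      rw [ht]
      push_cast
      ring
    have hsplit : QuantumAux.Nmat n Sig z
        = (QuantumAux.Nmat n Sig s0 - (ε : ℂ) • 1)
          + ((ε : ℂ) • 1 + ((t : ℂ) * Complex.I) • QuantumAux.Jc n) := by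
      rw [QuantumAux.Nmat, QuantumAux.Nmat, hz', add_mul, add_smul]
      abel
    have hPSDz : (QuantumAux.Nmat n Sig z).PosSemidef := by
      rw [hsplit]
      exact hgap.add (QuantumAux.shift_psd n ε t (by rw [ht]; linarith) (by rw [ht]; linarith))
    exact hzB.2.2 hPSDz
end

section
/- Let ħ > 0 and let Σ be a real symmetric 2n×2n matrix such that the complex Hermitian matrix Σ + (iħ/2)J is positive semidefinite. Then for every j with 1 ≤ j ≤ n, the entries of Σ satisfy Σ_{j,j} · Σ_{n+j,n+j} ≥ (Σ_{j,n+j})² + ħ²/4. -/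
open Matrix
open scoped ComplexOrder

/-- If `Σ + (iħ/2)J` is positive semidefinite then for each degree of freedom `j` the
variances and covariance encoded in `Σ` satisfy the Schrödinger–Robertson inequality
`Σ_{jj} Σ_{n+j,n+j} ≥ Σ_{j,n+j}² + ħ²/4`. -/
theorem robertson_schroedinger_of_quantum_condition (n : ℕ) (hbar : ℝ) (hbar_pos : 0 < hbar)
    (Sig : Matrix (Fin n ⊕ Fin n) (Fin n ⊕ Fin n) ℝ) (hSig : Sig.IsSymm)
    (h : (Sig.map Complex.ofReal +
        (((hbar : ℂ) / 2) * Complex.I) • (Jmat n).map Complex.ofReal).PosSemidef) :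
    ∀ j : Fin n, Sig (Sum.inl j) (Sum.inl j) * Sig (Sum.inr j) (Sum.inr j) ≥
      Sig (Sum.inl j) (Sum.inr j) ^ 2 + hbar ^ 2 / 4 := by
  intro j
  set a := Sig (Sum.inl j) (Sum.inl j) with ha
  set b := Sig (Sum.inr j) (Sum.inr j) with hb
  set c := Sig (Sum.inl j) (Sum.inr j) with hc
  set K := c ^ 2 + hbar ^ 2 / 4 with hK
  have hKpos : 0 < K := by positivity
  set M := (Sig.map Complex.ofReal +
      (((hbar : ℂ) / 2) * Complex.I) • (Jmat n).map Complex.ofReal) with hM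
  have hc' : Sig (Sum.inr j) (Sum.inl j) = c := hSig.apply _ _
  set z : ℂ := (c : ℂ) + (hbar / 2) * Complex.I with hz
  have e00 : M (Sum.inl j) (Sum.inl j) = (a : ℂ) := by
    simp [hM, Jmat, Matrix.fromBlocks, Matrix.add_apply, Matrix.map_apply]
    rfl
  have e01 : M (Sum.inl j) (Sum.inr j) = z := by
    simp [hM, hz, Jmat, Matrix.fromBlocks, Matrix.add_apply, Matrix.map_apply, Matrix.one_apply]
    rfl
  have e10 : M (Sum.inr j) (Sum.inl j) = (c : ℂ) - (hbar / 2) * Complex.I := by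
    simp [hM, Jmat, Matrix.fromBlocks, Matrix.add_apply, Matrix.map_apply, Matrix.one_apply, hc']
    ring
  have e11 : M (Sum.inr j) (Sum.inr j) = (b : ℂ) := by
    simp [hM, Jmat, Matrix.fromBlocks, Matrix.add_apply, Matrix.map_apply]
    rfl
  have hconj : (starRingEnd ℂ) z = (c : ℂ) - (hbar / 2) * Complex.I := by
    simp only [hz, map_add, _root_.map_mul, Complex.conj_I, map_div₀, Complex.conj_ofReal,
      map_ofNat]
    ring
  have key : ∀ t : ℝ, 0 ≤ a * K * (t * t) + 2 * K * t + b := by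
    intro t
    set w : (Fin n ⊕ Fin n) → ℂ :=
      fun i => if i = Sum.inl j then (t : ℂ) * z else if i = Sum.inr j then 1 else 0 with hw
    have h2 := h.dotProduct_mulVec_nonneg w
    have hwl : w (Sum.inl j) = (t : ℂ) * z := by simp [hw]
    have hwr : w (Sum.inr j) = 1 := by simp [hw]
    have hmv : ∀ i, (M *ᵥ w) i = M i (Sum.inl j) * ((t : ℂ) * z) + M i (Sum.inr j) := by
      intro i
      rw [mulVec, dotProduct, ← Finset.sum_subset (Finset.subset_univ {Sum.inl j, Sum.inr j})]
      · rw [Finset.sum_insert (by simp), Finset.sum_singleton, hwl, hwr, mul_one]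
      · intro i' _ hi'
        simp only [Finset.mem_insert, Finset.mem_singleton, not_or] at hi'
        simp [hw, hi'.1, hi'.2]
    have hsum : star w ⬝ᵥ M *ᵥ w = ((a * K * (t * t) + 2 * K * t + b : ℝ) : ℂ) := by
      rw [dotProduct, ← Finset.sum_subset (Finset.subset_univ {Sum.inl j, Sum.inr j})]
      · rw [Finset.sum_insert (by simp), Finset.sum_singleton]
        simp only [Pi.star_apply, hwl, hwr, hmv, e00, e01, e10, e11, RCLike.star_def,
          _root_.map_mul, Complex.conj_ofReal, hconj, star_one, one_mul]
        rw [hz, hK]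
        push_cast
        linear_combination (-((t:ℂ) ^ 2 * (a : ℂ) + 2 * t) * ((hbar : ℂ) / 2) ^ 2) * Complex.I_sq
      · intro i' _ hi'
        simp only [Finset.mem_insert, Finset.mem_singleton, not_or] at hi'
        simp [hw, hi'.1, hi'.2]
    rw [hsum] at h2
    exact Complex.zero_le_real.mp h2
  have disc := discrim_le_zero key
  rw [discrim] at disc
  nlinarith [hKpos, sq_nonneg (a * K)]
end

section
/- Williamson's theorem: Let M be a real symmetric positive-definite 2n×2n matrix. Then there exists S in the symplectic group Sp(2n,ℝ) such that Sᵀ M S = diag(Λ, Λ) where Λ = diag(λ₁,…,λ_n) and the λ_j > 0 are the moduli of the eigenvalues ±iλ_j of JM. Equivalently, the quadratic form Q(z) = Mz·z satisfies Q(Sz) = Σ_{j=1}^n λ_j (x_j² + p_j²) for all z = (x,p) ∈ ℝ²ⁿ. -/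
open Matrix Polynomial

open FiniteDimensional

local notation "⟪" x ", " y "⟫" => @inner ℝ _ _ x y

/-- Canonical form of an injective skew-adjoint endomorphism of a real inner product space. -/
theorem skew_canonical : ∀ (n : ℕ) (E : Type) (_ : NormedAddCommGroup E)
    (_ : InnerProductSpace ℝ E) (_ : FiniteDimensional ℝ E),
    Module.finrank ℝ E = 2 * n → ∀ T : E →ₗ[ℝ] E,
    (∀ x y : E, ⟪T x, y⟫ = -⟪x, T y⟫) → Function.Injective T →
    ∃ (e : Fin n ⊕ Fin n → E) (d : Fin n → ℝ), Orthonormal ℝ e ∧ (∀ j, 0 < d j) ∧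
      (∀ j, T (e (Sum.inl j)) = (-(d j)) • e (Sum.inr j)) ∧
      (∀ j, T (e (Sum.inr j)) = d j • e (Sum.inl j)) := by
  intro n
  induction n with
  | zero =>
    intro E _ _ _ hdim T hskew hinj
    refine ⟨Sum.elim Fin.elim0 Fin.elim0, Fin.elim0, ?_, fun j => j.elim0,
      fun j => j.elim0, fun j => j.elim0⟩
    rw [orthonormal_iff_ite]
    rintro (i | i) _ <;> exact i.elim0
  | succ n IH =>
    intro E _ _ _ hdim T hskew hinj
    have hT2 : (T ∘ₗ T).IsSymmetric := by
      intro x y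
      have h1 := hskew (T x) y
      have h2 := hskew x (T y)
      simp only [LinearMap.comp_apply]
      rw [h1]; rw [h2]; ring
    have hb := hT2.eigenvectorBasis hdim
    have hNpos : 0 < 2 * (n + 1) := by omega
    set i0 : Fin (2 * (n + 1)) := ⟨0, hNpos⟩ with hi0
    obtain ⟨u, hu_def⟩ : ∃ u, u = (hT2.eigenvectorBasis hdim) i0 := ⟨_, rfl⟩
    obtain ⟨μ, hμ_def⟩ : ∃ μ, μ = hT2.eigenvalues hdim i0 := ⟨_, rfl⟩
    have hev := hT2.hasEigenvector_eigenvectorBasis hdim i0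
    rw [← hu_def, ← hμ_def] at hev
    have hu1 : ‖u‖ = 1 := by rw [hu_def]; exact (hT2.eigenvectorBasis hdim).orthonormal.1 i0
    have happly : T (T u) = μ • u := by
      have h := hev.apply_eq_smul
      simpa only [LinearMap.comp_apply, RCLike.ofReal_real_eq_id, id_eq] using h
    have hune : u ≠ 0 := hev.2
    have hTu : T u ≠ 0 := by
      intro h
      exact hune (hinj (show T u = T 0 by simp [h]))
    obtain ⟨lam, hlam⟩ : ∃ l, l = ‖T u‖ := ⟨_, rfl⟩
    have hlampos : 0 < lam := by rw [hlam]; exact norm_pos_iff.mpr hTu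
    have hmu : μ = -(lam ^ 2) := by
      have h1 := hskew (T u) u
      rw [happly, real_inner_smul_left, real_inner_self_eq_norm_sq, hu1,
        real_inner_self_eq_norm_sq] at h1
      simpa [hlam] using h1
    obtain ⟨e₂, he₂⟩ : ∃ x, x = (-(lam⁻¹)) • T u := ⟨_, rfl⟩
    have hTe₁ : T u = (-lam) • e₂ := by
      rw [he₂, smul_smul]
      have : -lam * -lam⁻¹ = 1 := by field_simp
      rw [this, one_smul]
    have hTe₂ : T e₂ = lam • u := by
      rw [he₂, LinearMap.map_smul, happly, smul_smul, hmu]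
      congr 1
      field_simp
    have h11 : ⟪u, u⟫ = 1 := by
      rw [real_inner_self_eq_norm_sq, hu1]; norm_num
    have he₂norm : ‖e₂‖ = 1 := by
      rw [he₂, norm_smul, Real.norm_eq_abs, abs_neg, abs_inv, abs_of_pos hlampos, ← hlam,
        inv_mul_cancel₀ hlampos.ne']
    have h22 : ⟪e₂, e₂⟫ = 1 := by
      rw [real_inner_self_eq_norm_sq, he₂norm]; norm_num
    have h12 : ⟪u, e₂⟫ = 0 := by
      have h1 := hskew u u
      have h2 : ⟪u, T u⟫ = 0 := by
        rw [real_inner_comm] at h1; linarith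
      rw [he₂, real_inner_smul_right, h2, mul_zero]
    have h21 : ⟪e₂, u⟫ = 0 := by rw [real_inner_comm]; exact h12
    set v : Fin 2 → E := ![u, e₂] with hv
    have hvon : Orthonormal ℝ v := by
      rw [orthonormal_iff_ite]
      intro i j
      fin_cases i <;> fin_cases j <;> simp [hv, h11, h22, h12, h21, hu1, he₂norm]
    set U : Submodule ℝ E := Submodule.span ℝ (Set.range v) with hU
    have hUdim : Module.finrank ℝ U = 2 := by
      rw [hU, finrank_span_eq_card hvon.linearIndependent]
      simp
    set W : Submodule ℝ E := Uᗮ with hW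
    have hWdim : Module.finrank ℝ W = 2 * n := by
      have h : Module.finrank ℝ U + Module.finrank ℝ W = Module.finrank ℝ E :=
        Submodule.finrank_add_finrank_orthogonal (K := U)
      rw [hUdim, hdim] at h
      omega
    have hmem1 : u ∈ U := Submodule.subset_span ⟨0, rfl⟩
    have hmem2 : e₂ ∈ U := Submodule.subset_span ⟨1, rfl⟩
    have horthW : ∀ x : E, x ∈ W → ⟪u, x⟫ = 0 ∧ ⟪e₂, x⟫ = 0 := fun x hx =>
      ⟨(Submodule.mem_orthogonal U x).1 hx u hmem1,
       (Submodule.mem_orthogonal U x).1 hx e₂ hmem2⟩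
    have hTW : ∀ x ∈ W, T x ∈ W := by
      intro x hx
      rw [hW, Submodule.mem_orthogonal]
      intro y hy
      induction hy using Submodule.span_induction with
      | mem y hy =>
        obtain ⟨i, rfl⟩ := hy
        fin_cases i
        · show ⟪u, T x⟫ = 0
          have h := hskew u x
          rw [hTe₁, real_inner_smul_left, (horthW x hx).2] at h
          linarith
        · show ⟪e₂, T x⟫ = 0
          have h := hskew e₂ x
          rw [hTe₂, real_inner_smul_left, (horthW x hx).1] at h
          linarith
      | zero => exact inner_zero_left _
      | add a b _ _ ha hb => rw [inner_add_left, ha, hb]; ring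
      | smul c a _ ha => rw [real_inner_smul_left, ha]; ring
    set T' : W →ₗ[ℝ] W := T.restrict hTW with hT'
    have hcoeT' : ∀ x : ↥W, (T' x : E) = T (x : E) := fun x => rfl
    have hskew' : ∀ x y : ↥W, ⟪T' x, y⟫ = -⟪x, T' y⟫ := by
      intro x y
      have hc : ∀ a b : ↥W, ⟪a, b⟫ = ⟪(a : E), (b : E)⟫ := fun a b => rfl
      rw [hc, hc, hcoeT', hcoeT']
      exact hskew _ _
    have hinj' : Function.Injective T' := by
      intro a b hab
      have h : T (a : E) = T (b : E) := by
        rw [← hcoeT', ← hcoeT', hab]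
      exact Subtype.ext (hinj h)
    obtain ⟨f, d', hfon, hd', hf1, hf2⟩ :=
      IH ↥W inferInstance inferInstance inferInstance hWdim T' hskew' hinj'
    set e : Fin (n+1) ⊕ Fin (n+1) → E :=
      Sum.elim (Fin.cons u fun k => (f (Sum.inl k) : E))
               (Fin.cons e₂ fun k => (f (Sum.inr k) : E)) with he
    set d : Fin (n+1) → ℝ := Fin.cons lam d' with hd
    have hIP : ∀ k l, ⟪(f k : E), (f l : E)⟫ = if k = l then (1:ℝ) else 0 := by
      intro k l
      exact (orthonormal_iff_ite.mp hfon) k l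
    have hW0 : ∀ k, ⟪u, (f k : E)⟫ = 0 ∧ ⟪e₂, (f k : E)⟫ = 0 := fun k =>
      horthW _ (f k).2
    have hW0' : ∀ k, ⟪(f k : E), u⟫ = 0 ∧ ⟪(f k : E), e₂⟫ = 0 := fun k =>
      ⟨by rw [real_inner_comm]; exact (hW0 k).1, by rw [real_inner_comm]; exact (hW0 k).2⟩
    refine ⟨e, d, ?_, ?_, ?_, ?_⟩
    · rw [orthonormal_iff_ite]
      rintro (i | i) (j | j)
      · induction i using Fin.cases with
        | zero =>
          induction j using Fin.cases with
          | zero => simpa [he] using h11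
          | succ j => simpa [he, (Fin.succ_ne_zero j).symm] using (hW0 (Sum.inl j)).1
        | succ i =>
          induction j using Fin.cases with
          | zero => simpa [he, Fin.succ_ne_zero i] using (hW0' (Sum.inl i)).1
          | succ j => simpa [he, Fin.succ_inj] using hIP (Sum.inl i) (Sum.inl j)
      · induction i using Fin.cases with
        | zero =>
          induction j using Fin.cases with
          | zero => simpa [he] using h12
          | succ j => simpa [he] using (hW0 (Sum.inr j)).1
        | succ i =>
          induction j using Fin.cases with
          | zero => simpa [he] using (hW0' (Sum.inl i)).2
          | succ j => simpa [he] using hIP (Sum.inl i) (Sum.inr j)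
      · induction i using Fin.cases with
        | zero =>
          induction j using Fin.cases with
          | zero => simpa [he] using h21
          | succ j => simpa [he] using (hW0 (Sum.inl j)).2
        | succ i =>
          induction j using Fin.cases with
          | zero => simpa [he] using (hW0' (Sum.inr i)).1
          | succ j => simpa [he] using hIP (Sum.inr i) (Sum.inl j)
      · induction i using Fin.cases with
        | zero =>
          induction j using Fin.cases with
          | zero => simpa [he] using h22
          | succ j => simpa [he, (Fin.succ_ne_zero j).symm] using (hW0 (Sum.inr j)).2
        | succ i =>
          induction j using Fin.cases with
          | zero => simpa [he, Fin.succ_ne_zero i] using (hW0' (Sum.inr i)).2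
          | succ j => simpa [he, Fin.succ_inj] using hIP (Sum.inr i) (Sum.inr j)
    · intro j
      induction j using Fin.cases with
      | zero => simpa [hd] using hlampos
      | succ j => simpa [hd] using hd' j
    · intro j
      induction j using Fin.cases with
      | zero => simpa [he, hd] using hTe₁
      | succ j =>
        have h := congrArg (Subtype.val) (hf1 j)
        rw [hcoeT'] at h
        simpa [he, hd] using h
    · intro j
      induction j using Fin.cases with
      | zero => simpa [he, hd] using hTe₂
      | succ j =>
        have h := congrArg (Subtype.val) (hf2 j)
        rw [hcoeT'] at h
        simpa [he, hd] using h

theorem charpoly_conj {m : Type*} [Fintype m] [DecidableEq m] (P A Q : Matrix m m ℝ)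
    (h1 : P * Q = 1) : (P * A * Q).charpoly = A.charpoly := by
  have hP : (P.map C) * (Q.map C) = 1 := by
    rw [← Matrix.map_mul, h1]
    simp
  have hch : charmatrix (P * A * Q) = P.map C * charmatrix A * Q.map C := by
    unfold charmatrix
    rw [Matrix.mul_sub, Matrix.sub_mul]
    congr 1
    · symm
      rw [Matrix.mul_assoc, (Matrix.scalar_commute (X : ℝ[X]) (fun r => Commute.all _ _) (Q.map C)).eq,
        ← Matrix.mul_assoc, hP, Matrix.one_mul]
    · simp only [RingHom.mapMatrix_apply, Matrix.map_mul]
  rw [Matrix.charpoly, Matrix.charpoly, hch, Matrix.det_mul, Matrix.det_mul]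
  have hdet : (P.map C).det * (Q.map C).det = 1 := by
    rw [← Matrix.det_mul, hP, Matrix.det_one]
  calc (P.map C).det * (charmatrix A).det * (Q.map C).det
      = (charmatrix A).det * ((P.map C).det * (Q.map C).det) := by ring
    _ = (charmatrix A).det := by rw [hdet, mul_one]

/-- Canonical form for invertible skew-symmetric real matrices of even size. -/
theorem skew_matrix_canonical (n : ℕ) (K : Matrix (Fin n ⊕ Fin n) (Fin n ⊕ Fin n) ℝ)
    (hskew : Kᵀ = -K) (hker : ∀ x, K.mulVec x = 0 → x = 0) :
    ∃ (O : Matrix (Fin n ⊕ Fin n) (Fin n ⊕ Fin n) ℝ) (μ : Fin n → ℝ),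
      Oᵀ * O = 1 ∧ O * Oᵀ = 1 ∧ (∀ j, 0 < μ j) ∧
      Oᵀ * K * O = fromBlocks 0 (diagonal μ) (-(diagonal μ)) 0 := by
  classical
  have hinner : ∀ x y : EuclideanSpace ℝ (Fin n ⊕ Fin n),
      ⟪x, y⟫ = dotProduct (x : (Fin n ⊕ Fin n) → ℝ) y := by
    intro x y
    simp [PiLp.inner_apply, RCLike.inner_apply, dotProduct, mul_comm]
  set T : EuclideanSpace ℝ (Fin n ⊕ Fin n) →ₗ[ℝ] EuclideanSpace ℝ (Fin n ⊕ Fin n) :=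
    { toFun := fun x => WithLp.toLp 2 (K.mulVec x)
      map_add' := fun x y => congrArg (WithLp.toLp 2) (K.mulVec_add x y)
      map_smul' := fun c x => congrArg (WithLp.toLp 2) (K.mulVec_smul c x) } with hT
  have hTapp : ∀ x : EuclideanSpace ℝ (Fin n ⊕ Fin n),
      T x = (K.mulVec x : (Fin n ⊕ Fin n) → ℝ) := fun _ => rfl
  have hskewT : ∀ x y : EuclideanSpace ℝ (Fin n ⊕ Fin n), ⟪T x, y⟫ = -⟪x, T y⟫ := by
    intro x y
    rw [hinner, hinner, hTapp, hTapp]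
    have h : dotProduct (K.mulVec x) (y : (Fin n ⊕ Fin n) → ℝ)
        = dotProduct (x : (Fin n ⊕ Fin n) → ℝ) (Kᵀ.mulVec y) := by
      rw [dotProduct_mulVec, Matrix.vecMul_transpose]
    rw [h, hskew, Matrix.neg_mulVec, dotProduct_neg]
  have hinjT : Function.Injective T := by
    intro x y hxy
    have h0 : T (x - y) = 0 := by rw [map_sub, hxy, sub_self]
    exact WithLp.ofLp_injective 2 (sub_eq_zero.mp (hker (x - y) (congrArg WithLp.ofLp h0)))
  have hdim : Module.finrank ℝ (EuclideanSpace ℝ (Fin n ⊕ Fin n)) = 2 * n := by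
    simp [finrank_euclideanSpace, Fintype.card_sum]
    ring
  obtain ⟨e, μ, hon, hμpos, he1, he2⟩ :=
    skew_canonical n (EuclideanSpace ℝ (Fin n ⊕ Fin n)) inferInstance inferInstance
      inferInstance hdim T hskewT hinjT
  set O : Matrix (Fin n ⊕ Fin n) (Fin n ⊕ Fin n) ℝ := Matrix.of fun i j => e j i with hO
  have hO1 : Oᵀ * O = 1 := by
    ext i j
    rw [Matrix.mul_apply, Matrix.one_apply]
    have h := orthonormal_iff_ite.mp hon i j
    rw [hinner] at h
    simpa [hO, dotProduct, mul_comm] using h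
  have hO2 : O * Oᵀ = 1 := mul_eq_one_comm.mp hO1
  have hKO : K * O = O * fromBlocks 0 (diagonal μ) (-(diagonal μ)) 0 := by
    ext a c
    rcases c with j | j
    · have hcol : (K.mulVec (e (Sum.inl j))) a
          = ((-(μ j)) • e (Sum.inr j) : EuclideanSpace ℝ (Fin n ⊕ Fin n)) a := by
        rw [← hTapp, he1 j]
      have hL : (K * O) a (Sum.inl j) = (K.mulVec (e (Sum.inl j))) a := by
        simp [hO, Matrix.mul_apply, Matrix.mulVec, dotProduct]
      rw [hL, hcol]
      simp [hO, Matrix.mul_apply, Fintype.sum_sum_type, Matrix.diagonal_apply,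
        Finset.mul_sum, mul_comm, Finset.sum_ite_eq', PiLp.smul_apply, Pi.neg_apply,
        Pi.smul_apply, smul_eq_mul]
    · have hcol : (K.mulVec (e (Sum.inr j))) a
          = ((μ j) • e (Sum.inl j) : EuclideanSpace ℝ (Fin n ⊕ Fin n)) a := by
        rw [← hTapp, he2 j]
      have hL : (K * O) a (Sum.inr j) = (K.mulVec (e (Sum.inr j))) a := by
        simp [hO, Matrix.mul_apply, Matrix.mulVec, dotProduct]
      rw [hL, hcol]
      simp [hO, Matrix.mul_apply, Fintype.sum_sum_type, Matrix.diagonal_apply,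
        Finset.mul_sum, mul_comm, Finset.sum_ite_eq', PiLp.smul_apply, Pi.neg_apply,
        Pi.smul_apply, smul_eq_mul]
  refine ⟨O, μ, hO1, hO2, hμpos, ?_⟩
  rw [Matrix.mul_assoc, hKO, ← Matrix.mul_assoc, hO1, Matrix.one_mul]

theorem charpoly_Bform (n : ℕ) (lam : Fin n → ℝ) :
    (fromBlocks 0 (diagonal lam) (-(diagonal lam)) (0 : Matrix (Fin n) (Fin n) ℝ)).charpoly
      = ∏ j : Fin n, ((X : ℝ[X]) ^ 2 + C (lam j ^ 2)) := by
  classical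
  set B : Matrix (Fin n ⊕ Fin n) (Fin n ⊕ Fin n) ℝ :=
    fromBlocks 0 (diagonal lam) (-(diagonal lam)) 0 with hB
  set q : ℝ[X] := ∏ j : Fin n, ((X : ℝ[X]) ^ 2 + C (lam j ^ 2)) with hq
  have hmp : B.charpoly.Monic := Matrix.charpoly_monic _
  have hmq : q.Monic := monic_prod_of_monic _ _ (fun j _ => monic_X_pow_add_C _ two_ne_zero)
  have hcm : charmatrix B = fromBlocks (diagonal fun _ => (X : ℝ[X]))
      (diagonal fun j => -C (lam j)) (diagonal fun j => C (lam j)) (diagonal fun _ => X) := by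
    ext i j
    rcases i with i | i <;> rcases j with j | j <;>
      simp [hB, Matrix.charmatrix_apply, Matrix.fromBlocks, Matrix.diagonal_apply, apply_ite
        (C : ℝ → ℝ[X])] <;>
      split_ifs <;> simp
  have hprod : charmatrix B * (charmatrix B)ᵀ
      = fromBlocks (diagonal fun j => (X : ℝ[X]) ^ 2 + C (lam j ^ 2)) 0 0
          (diagonal fun j => (X : ℝ[X]) ^ 2 + C (lam j ^ 2)) := by
    rw [hcm, Matrix.fromBlocks_transpose]
    simp only [Matrix.diagonal_transpose]
    rw [Matrix.fromBlocks_multiply]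
    simp only [Matrix.diagonal_mul_diagonal, Matrix.diagonal_add]
    have g1 : (fun i => (X:ℝ[X]) * X + -C (lam i) * -C (lam i)) = fun j => (X:ℝ[X]) ^ 2 + C (lam j ^ 2) := by
      funext j; rw [pow_two, pow_two, _root_.map_mul]; ring
    have g2 : (fun i => (X:ℝ[X]) * C (lam i) + -C (lam i) * X) = fun _ : Fin n => (0:ℝ[X]) := by
      funext j; ring
    have g3 : (fun i => C (lam i) * (X:ℝ[X]) + X * -C (lam i)) = fun _ : Fin n => (0:ℝ[X]) := by
      funext j; ring
    have g4 : (fun i => C (lam i) * C (lam i) + (X:ℝ[X]) * X) = fun j => (X:ℝ[X]) ^ 2 + C (lam j ^ 2) := by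
      funext j; rw [pow_two, pow_two, _root_.map_mul]; ring
    rw [g1, g2, g3, g4, Matrix.diagonal_zero]
  have hsq : B.charpoly * B.charpoly = q * q := by
    have h1 : B.charpoly = (charmatrix B).det := rfl
    rw [h1]
    calc (charmatrix B).det * (charmatrix B).det
        = (charmatrix B).det * ((charmatrix B)ᵀ).det := by rw [Matrix.det_transpose]
      _ = (charmatrix B * (charmatrix B)ᵀ).det := (Matrix.det_mul _ _).symm
      _ = q * q := by
          rw [hprod, Matrix.det_fromBlocks_zero₁₂]
          rw [Matrix.det_diagonal, hq]
  have hfac : (B.charpoly - q) * (B.charpoly + q) = 0 := by linear_combination hsq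
  rcases mul_eq_zero.mp hfac with h | h
  · exact sub_eq_zero.mp h
  · exfalso
    have hpq : B.charpoly = -q := eq_neg_of_add_eq_zero_left h
    have := congrArg Polynomial.leadingCoeff hpq
    rw [hmp.leadingCoeff, Polynomial.leadingCoeff_neg, hmq.leadingCoeff] at this
    norm_num at this

/-- `S` is symplectic: `Sᵀ J S = J`. -/
def IsSymplectic {n : ℕ} (S : Matrix (Fin n ⊕ Fin n) (Fin n ⊕ Fin n) ℝ) : Prop :=
  Sᵀ * Jmat n * S = Jmat n

/-- Williamson's theorem: a real symmetric positive-definite `2n×2n` matrix `M` can be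
diagonalized by a symplectic matrix `S` as `Sᵀ M S = diag(Λ,Λ)`, where `Λ = diag(λ₁,…,λₙ)`
and the `λ_j > 0` are the moduli of the eigenvalues `±iλ_j` of `JM` (equivalently, the
characteristic polynomial of `JM` is `∏ (X² + λ_j²)`). -/
theorem williamson (n : ℕ) (M : Matrix (Fin n ⊕ Fin n) (Fin n ⊕ Fin n) ℝ) (hM : M.PosDef) :
    ∃ lam : Fin n → ℝ, (∀ j, 0 < lam j) ∧
      (Jmat n * M).charpoly = (∏ j : Fin n, (X ^ 2 + C (lam j ^ 2))) ∧
      ∃ S : Matrix (Fin n ⊕ Fin n) (Fin n ⊕ Fin n) ℝ, IsSymplectic S ∧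
        Sᵀ * M * S = Matrix.fromBlocks (Matrix.diagonal lam) 0 0 (Matrix.diagonal lam) := by
  classical
  set R := (open scoped MatrixOrder in CFC.sqrt M) with hRdef
  have hR2 : R * R = M := by
    open scoped MatrixOrder in exact CFC.sqrt_mul_sqrt_self M hM.posSemidef.nonneg
  have hRsym : Rᵀ = R := by
    have h := (open scoped MatrixOrder in Matrix.nonneg_iff_posSemidef.mp (CFC.sqrt_nonneg M)).1
    rwa [Matrix.IsHermitian, Matrix.conjTranspose_eq_transpose_of_trivial] at h
  have hMdet : 0 < M.det := hM.det_pos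
  have hRdet : IsUnit R.det := by
    refine isUnit_iff_ne_zero.mpr fun h => ?_
    rw [← hR2, Matrix.det_mul, h, mul_zero] at hMdet
    exact lt_irrefl _ hMdet
  set Ri := R⁻¹ with hRidef
  have hRRi : R * Ri = 1 := Matrix.mul_nonsing_inv _ hRdet
  have hRiR : Ri * R = 1 := Matrix.nonsing_inv_mul _ hRdet
  have hRit : Riᵀ = Ri := by rw [hRidef, Matrix.transpose_nonsing_inv, hRsym]
  have hJt : (Jmat n)ᵀ = -(Jmat n) := by
    rw [Jmat, Matrix.fromBlocks_transpose, Matrix.fromBlocks_neg]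
    simp
  have hJJ : Jmat n * Jmat n = -1 := by
    rw [Jmat, Matrix.fromBlocks_multiply, ← Matrix.fromBlocks_one, Matrix.fromBlocks_neg]
    simp
  -- cancellation helpers
  have cRRi : ∀ Z : Matrix (Fin n ⊕ Fin n) (Fin n ⊕ Fin n) ℝ, R * (Ri * Z) = Z := fun Z => by
    rw [← Matrix.mul_assoc, hRRi, Matrix.one_mul]
  have cRiR : ∀ Z : Matrix (Fin n ⊕ Fin n) (Fin n ⊕ Fin n) ℝ, Ri * (R * Z) = Z := fun Z => by
    rw [← Matrix.mul_assoc, hRiR, Matrix.one_mul]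
  have cJJ : ∀ Z : Matrix (Fin n ⊕ Fin n) (Fin n ⊕ Fin n) ℝ, Jmat n * (Jmat n * Z) = -Z :=
    fun Z => by rw [← Matrix.mul_assoc, hJJ, neg_one_mul]
  -- the skew matrix K = R⁻¹ J R⁻¹
  have hskewK : (Ri * (Jmat n * Ri))ᵀ = -(Ri * (Jmat n * Ri)) := by
    rw [Matrix.transpose_mul, Matrix.transpose_mul, hRit, hJt]
    simp [Matrix.mul_neg, Matrix.neg_mul, Matrix.mul_assoc]
  have hL : (R * (-(Jmat n) * R)) * (Ri * (Jmat n * Ri)) = 1 := by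
    simp only [Matrix.mul_assoc, Matrix.neg_mul, Matrix.mul_neg]
    rw [cRRi, cJJ]
    simp only [Matrix.mul_neg, neg_neg]
    rw [hRRi]
  have hker : ∀ x, (Ri * (Jmat n * Ri)).mulVec x = 0 → x = 0 := by
    intro x hx
    have h1 : ((R * (-(Jmat n) * R)) * (Ri * (Jmat n * Ri))).mulVec x = 0 := by
      rw [← Matrix.mulVec_mulVec, hx, Matrix.mulVec_zero]
    rwa [hL, Matrix.one_mulVec] at h1
  obtain ⟨O, μ, hO1, hO2, hμpos, hKO⟩ := skew_matrix_canonical n (Ri * (Jmat n * Ri)) hskewK hker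
  have cOOt : ∀ Z : Matrix (Fin n ⊕ Fin n) (Fin n ⊕ Fin n) ℝ, O * (Oᵀ * Z) = Z := fun Z => by
    rw [← Matrix.mul_assoc, hO2, Matrix.one_mul]
  have cOtO : ∀ Z : Matrix (Fin n ⊕ Fin n) (Fin n ⊕ Fin n) ℝ, Oᵀ * (O * Z) = Z := fun Z => by
    rw [← Matrix.mul_assoc, hO1, Matrix.one_mul]
  set lam : Fin n → ℝ := fun j => (μ j)⁻¹ with hlamdef
  have hlampos : ∀ j, 0 < lam j := fun j => inv_pos.mpr (hμpos j)
  have hlamμ : ∀ j, lam j * μ j = 1 := fun j => inv_mul_cancel₀ (hμpos j).ne'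
  have hμlam : ∀ j, μ j * lam j = 1 := fun j => mul_inv_cancel₀ (hμpos j).ne'
  -- notation for the block forms
  set Bμ : Matrix (Fin n ⊕ Fin n) (Fin n ⊕ Fin n) ℝ :=
    fromBlocks 0 (diagonal μ) (-(diagonal μ)) 0 with hBμ
  set Bl : Matrix (Fin n ⊕ Fin n) (Fin n ⊕ Fin n) ℝ :=
    fromBlocks 0 (diagonal lam) (-(diagonal lam)) 0 with hBl
  have hBlBμ : Bl * Bμ = -1 := by
    rw [hBl, hBμ, Matrix.fromBlocks_multiply]
    simp only [Matrix.mul_zero, Matrix.zero_mul, Matrix.mul_neg, Matrix.neg_mul,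
      Matrix.diagonal_mul_diagonal, zero_add, add_zero, neg_neg]
    rw [show (fun j => lam j * μ j) = fun _ : Fin n => (1:ℝ) from funext fun j => hlamμ j,
      Matrix.diagonal_one, ← Matrix.fromBlocks_one, Matrix.fromBlocks_neg]
    simp
  have hBμBl : Bμ * Bl = -1 := by
    rw [hBμ, hBl, Matrix.fromBlocks_multiply]
    simp only [Matrix.mul_zero, Matrix.zero_mul, Matrix.mul_neg, Matrix.neg_mul,
      Matrix.diagonal_mul_diagonal, zero_add, add_zero, neg_neg]
    rw [show (fun j => μ j * lam j) = fun _ : Fin n => (1:ℝ) from funext fun j => hμlam j,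
      Matrix.diagonal_one, ← Matrix.fromBlocks_one, Matrix.fromBlocks_neg]
    simp
  -- Oᵀ (R J R) O = Bl
  have hXB : (Oᵀ * (R * (Jmat n * R)) * O) * Bμ = -1 := by
    rw [← hKO]
    simp only [Matrix.mul_assoc]
    rw [cOOt, cRRi, cJJ]
    simp only [Matrix.mul_neg]
    rw [cRRi, hO1]
  have hXl : Oᵀ * (R * (Jmat n * R)) * O = Bl := by
    have h3 : Bμ * (-Bl) = 1 := by rw [Matrix.mul_neg, hBμBl, neg_neg]
    calc Oᵀ * (R * (Jmat n * R)) * O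
        = (Oᵀ * (R * (Jmat n * R)) * O) * (Bμ * (-Bl)) := by rw [h3, Matrix.mul_one]
      _ = ((Oᵀ * (R * (Jmat n * R)) * O) * Bμ) * (-Bl) := by
            simp only [Matrix.mul_assoc]
      _ = (-1 : Matrix (Fin n ⊕ Fin n) (Fin n ⊕ Fin n) ℝ) * (-Bl) := by rw [hXB]
      _ = Bl := by simp
  -- charpoly
  have hcp : (Jmat n * M).charpoly = ∏ j : Fin n, ((X:ℝ[X]) ^ 2 + C (lam j ^ 2)) := by
    have hconj1 : R * (Jmat n * M) * Ri = R * (Jmat n * R) := by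
      rw [← hR2]
      simp only [Matrix.mul_assoc, hRRi, Matrix.mul_one]
    have e1 : (Jmat n * M).charpoly = (R * (Jmat n * M) * Ri).charpoly :=
      (charpoly_conj R (Jmat n * M) Ri hRRi).symm
    have e2 : (R * (Jmat n * R)).charpoly = (Oᵀ * (R * (Jmat n * R)) * O).charpoly :=
      (charpoly_conj Oᵀ (R * (Jmat n * R)) O hO1).symm
    rw [e1, hconj1, e2, hXl, hBl]
    exact charpoly_Bform n lam
  -- the symplectic matrix
  set g : Fin n → ℝ := fun j => Real.sqrt (lam j) with hg
  have hgg : ∀ j, g j * g j = lam j := fun j => Real.mul_self_sqrt (hlampos j).le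
  set G : Matrix (Fin n ⊕ Fin n) (Fin n ⊕ Fin n) ℝ :=
    fromBlocks (diagonal g) 0 0 (diagonal g) with hG
  have hGt : Gᵀ = G := by
    rw [hG, Matrix.fromBlocks_transpose]
    simp
  have hGG : G * G = fromBlocks (diagonal lam) 0 0 (diagonal lam) := by
    rw [hG, Matrix.fromBlocks_multiply]
    simp only [Matrix.mul_zero, Matrix.zero_mul, Matrix.diagonal_mul_diagonal, add_zero, zero_add]
    rw [show (fun j => g j * g j) = lam from funext fun j => hgg j]
  refine ⟨lam, hlampos, hcp, Ri * (O * G), ?_, ?_⟩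
  · show (Ri * (O * G))ᵀ * Jmat n * (Ri * (O * G)) = Jmat n
    have hKO' : ∀ Z : Matrix (Fin n ⊕ Fin n) (Fin n ⊕ Fin n) ℝ,
        Oᵀ * (Ri * (Jmat n * (Ri * (O * Z)))) = Bμ * Z := by
      intro Z
      have h := congrArg (fun Y => Y * Z) hKO
      simpa only [Matrix.mul_assoc] using h
    rw [Matrix.transpose_mul, Matrix.transpose_mul, hRit, hGt]
    simp only [Matrix.mul_assoc]
    rw [hKO']
    -- goal : G * (Bμ * G) = Jmat n
    rw [hBμ, hG, ← Matrix.mul_assoc, Matrix.fromBlocks_multiply, Matrix.fromBlocks_multiply]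
    simp only [Matrix.mul_zero, Matrix.zero_mul, Matrix.mul_neg, Matrix.neg_mul,
      Matrix.diagonal_mul_diagonal, zero_add, add_zero, neg_neg, Matrix.mul_one,
      Matrix.zero_mul]
    rw [Jmat, neg_zero,
      show (fun i => g i * μ i * g i) = fun _ : Fin n => (1:ℝ) from funext fun i => by
        calc g i * μ i * g i = μ i * (g i * g i) := by ring
          _ = μ i * lam i := by rw [hgg i]
          _ = 1 := hμlam i,
      Matrix.diagonal_one]
  · rw [Matrix.transpose_mul, Matrix.transpose_mul, hRit, hGt, ← hR2]
    simp only [Matrix.mul_assoc]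
    rw [cRiR, cRRi, cOtO, hGG]
end

section
/- Let M be a real symmetric positive-definite 2n×2n matrix and let D = diag(Λ, Λ) with Λ = diag(λ₁,…,λ_n), λ_j > 0, be a Williamson diagonal form of M. If S and S' in Sp(2n,ℝ) both satisfy Sᵀ M S = D and S'ᵀ M S' = D, then U = S⁻¹ S' belongs to Sp(2n,ℝ) ∩ O(2n), i.e. U is both symplectic and orthogonal, so S' = SU with U symplectic and orthogonal. -/
open Matrix

/-- Uniqueness in Williamson's theorem up to a symplectic rotation: if two symplectic
matrices `S`, `S'` bring the symmetric positive-definite matrix `M` into the same Williamson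
diagonal form `D = diag(Λ,Λ)`, then `U = S⁻¹S'` is both symplectic and orthogonal, and
`S' = SU`. -/
theorem williamson_uniqueness (n : ℕ) (M : Matrix (Fin n ⊕ Fin n) (Fin n ⊕ Fin n) ℝ)
    (hM : M.PosDef) (lam : Fin n → ℝ) (hlam : ∀ j, 0 < lam j)
    (S S' : Matrix (Fin n ⊕ Fin n) (Fin n ⊕ Fin n) ℝ)
    (hS : IsSymplectic S) (hS' : IsSymplectic S')
    (hD : Sᵀ * M * S = Matrix.fromBlocks (Matrix.diagonal lam) 0 0 (Matrix.diagonal lam))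
    (hD' : S'ᵀ * M * S' = Matrix.fromBlocks (Matrix.diagonal lam) 0 0 (Matrix.diagonal lam)) :
    IsSymplectic (S⁻¹ * S') ∧ (S⁻¹ * S')ᵀ * (S⁻¹ * S') = 1 ∧ S' = S * (S⁻¹ * S') := by
  classical
  set J : Matrix (Fin n ⊕ Fin n) (Fin n ⊕ Fin n) ℝ := Jmat n with hJdef
  set D : Matrix (Fin n ⊕ Fin n) (Fin n ⊕ Fin n) ℝ :=
    Matrix.fromBlocks (Matrix.diagonal lam) 0 0 (Matrix.diagonal lam) with hDdef
  -- basic facts about J and D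
  have hJJ : J * J = -1 := by
    rw [hJdef]
    show Matrix.fromBlocks 0 1 (-1) 0 * Matrix.fromBlocks 0 1 (-1) 0 = _
    rw [Matrix.fromBlocks_multiply]
    ext (i|i) (j|j) <;> simp [Matrix.one_apply]
  have hDJ : D * J = J * D := by
    rw [hJdef, hDdef]
    show Matrix.fromBlocks (Matrix.diagonal lam) 0 0 (Matrix.diagonal lam) *
        Matrix.fromBlocks 0 1 (-1) 0 = Matrix.fromBlocks 0 1 (-1) 0 *
        Matrix.fromBlocks (Matrix.diagonal lam) 0 0 (Matrix.diagonal lam)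
    rw [Matrix.fromBlocks_multiply, Matrix.fromBlocks_multiply]
    ext (i|i) (j|j) <;> simp
  set d : (Fin n ⊕ Fin n) → ℝ := Sum.elim lam lam with hddef
  have hd : ∀ i, 0 < d i := by rintro (i | i) <;> exact hlam i
  have hDdiag : D = Matrix.diagonal d := by
    rw [hDdef, hddef, Matrix.fromBlocks_diagonal]
  set E : Matrix (Fin n ⊕ Fin n) (Fin n ⊕ Fin n) ℝ :=
    Matrix.diagonal (fun i => (d i)⁻¹) with hEdef
  have hED : E * D = 1 := by
    have hfun : (fun i => (d i)⁻¹ * d i) = fun _ => (1 : ℝ) :=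
      funext fun i => inv_mul_cancel₀ (hd i).ne'
    rw [hDdiag, hEdef, Matrix.diagonal_mul_diagonal, hfun, Matrix.diagonal_one]
  -- left inverses of symplectic matrices
  have hleft : ∀ A : Matrix (Fin n ⊕ Fin n) (Fin n ⊕ Fin n) ℝ,
      Aᵀ * J * A = J → (-(J * Aᵀ * J)) * A = 1 := by
    intro A hA
    have h1 : (-(J * Aᵀ * J)) * A = -(J * (Aᵀ * J * A)) := by
      noncomm_ring
    rw [h1, hA, hJJ]
    simp
  have hTS : (-(J * Sᵀ * J)) * S = 1 := hleft S hS
  set T : Matrix (Fin n ⊕ Fin n) (Fin n ⊕ Fin n) ℝ := -(J * Sᵀ * J) with hTdef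
  have hST : S * T = 1 := mul_eq_one_comm.mp hTS
  have hSinv : S⁻¹ = T := Matrix.inv_eq_left_inv hTS
  set U : Matrix (Fin n ⊕ Fin n) (Fin n ⊕ Fin n) ℝ := T * S' with hUdef
  -- T transports J and M
  have hTJ : Tᵀ * J * T = J := by
    calc Tᵀ * J * T = Tᵀ * (Sᵀ * J * S) * T := by rw [hS]
      _ = (S * T)ᵀ * J * (S * T) := by
          rw [Matrix.transpose_mul]
          noncomm_ring
      _ = J := by rw [hST]; simp
  have hTM : Tᵀ * D * T = M := by
    calc Tᵀ * D * T = Tᵀ * (Sᵀ * M * S) * T := by rw [hD]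
      _ = (S * T)ᵀ * M * (S * T) := by
          rw [Matrix.transpose_mul]
          noncomm_ring
      _ = M := by rw [hST]; simp
  -- U is symplectic and preserves D
  have hUJ : Uᵀ * J * U = J := by
    calc Uᵀ * J * U = S'ᵀ * (Tᵀ * J * T) * S' := by
          rw [hUdef, Matrix.transpose_mul]; noncomm_ring
      _ = S'ᵀ * J * S' := by rw [hTJ]
      _ = J := hS'
  have hUD : Uᵀ * D * U = D := by
    calc Uᵀ * D * U = S'ᵀ * (Tᵀ * D * T) * S' := by
          rw [hUdef, Matrix.transpose_mul]; noncomm_ring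
      _ = S'ᵀ * M * S' := by rw [hTM]
      _ = D := hD'
  -- U is invertible
  have hVU : (-(J * Uᵀ * J)) * U = 1 := hleft U hUJ
  set V : Matrix (Fin n ⊕ Fin n) (Fin n ⊕ Fin n) ℝ := -(J * Uᵀ * J) with hVdef
  have hUV : U * V = 1 := mul_eq_one_comm.mp hVU
  -- Uᵀ commutes with D * J
  have hWJ : Uᵀ * J = J * V := by
    have := congrArg (fun X => X * V) hUJ
    simpa [Matrix.mul_assoc, hUV] using this
  have hWD : Uᵀ * D = D * V := by
    have := congrArg (fun X => X * V) hUD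
    simpa [Matrix.mul_assoc, hUV] using this
  have hVexpr : V = -(J * (Uᵀ * J)) := by
    have h1 : J * (J * V) = -V := by
      rw [← Matrix.mul_assoc, hJJ]; simp
    rw [← hWJ] at h1
    rw [← neg_neg V, ← h1]
  have hcommK : Uᵀ * (D * J) = (D * J) * Uᵀ := by
    have h2 : Uᵀ * D = -(D * (J * (Uᵀ * J))) := by
      rw [hWD, hVexpr]; noncomm_ring
    have h3 := congrArg (fun X => X * J) h2
    calc Uᵀ * (D * J) = Uᵀ * D * J := by rw [Matrix.mul_assoc]
      _ = -(D * (J * (Uᵀ * J))) * J := h3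
      _ = -(D * J * Uᵀ * (J * J)) := by noncomm_ring
      _ = D * J * Uᵀ := by rw [hJJ]; simp
  -- hence Uᵀ commutes with D², hence with D
  have hcommD2 : Uᵀ * (D * D) = (D * D) * Uᵀ := by
    have h4 : Uᵀ * ((D * J) * (D * J)) = ((D * J) * (D * J)) * Uᵀ := by
      calc Uᵀ * ((D * J) * (D * J)) = (Uᵀ * (D * J)) * (D * J) := by
            simp only [Matrix.mul_assoc]
        _ = ((D * J) * Uᵀ) * (D * J) := by rw [hcommK]
        _ = (D * J) * (Uᵀ * (D * J)) := by simp only [Matrix.mul_assoc]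
        _ = (D * J) * ((D * J) * Uᵀ) := by rw [hcommK]
        _ = ((D * J) * (D * J)) * Uᵀ := by simp only [Matrix.mul_assoc]
    have h5 : (D * J) * (D * J) = -(D * D) := by
      calc (D * J) * (D * J) = D * (J * D) * J := by noncomm_ring
        _ = D * (D * J) * J := by rw [← hDJ]
        _ = D * D * (J * J) := by noncomm_ring
        _ = -(D * D) := by rw [hJJ]; simp
    rw [h5] at h4
    have := congrArg Neg.neg h4
    simpa using this
  have hcommD : Uᵀ * D = D * Uᵀ := by
    rw [hDdiag] at hcommD2 ⊢
    rw [Matrix.diagonal_mul_diagonal] at hcommD2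
    ext i j
    rw [Matrix.mul_diagonal, Matrix.diagonal_mul]
    have h6 := congrFun (congrFun hcommD2 i) j
    rw [Matrix.mul_diagonal, Matrix.diagonal_mul, Matrix.transpose_apply] at h6
    rw [Matrix.transpose_apply]
    by_cases hij : U j i = 0
    · simp [hij]
    · have h7 : (d j * d j - d i * d i) * U j i = 0 := by linear_combination h6
      have hdd : d j * d j = d i * d i := by
        rcases mul_eq_zero.mp h7 with h | h
        · linarith [sub_eq_zero.mp h]
        · exact absurd h hij
      have : d j = d i := by nlinarith [hd i, hd j]
      rw [this]; ring
  -- conclude Uᵀ = V, hence Uᵀ * U = 1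
  have hWV : Uᵀ = V := by
    have h7 : D * Uᵀ = D * V := by rw [← hcommD, hWD]
    have h8 := congrArg (fun X => E * X) h7
    simpa [← Matrix.mul_assoc, hED] using h8
  have hUorth : Uᵀ * U = 1 := by rw [hWV]; exact hVU
  -- final assembly
  have hSU : S * U = S' := by
    rw [hUdef, ← Matrix.mul_assoc, hST, Matrix.one_mul]
  refine ⟨?_, ?_, ?_⟩
  · show (S⁻¹ * S')ᵀ * Jmat n * (S⁻¹ * S') = Jmat n
    rw [hSinv, ← hJdef]
    exact hUJ
  · rw [hSinv]
    exact hUorth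
  · rw [hSinv]
    exact hSU.symm
end

section
/- Monotonicity of the symplectic spectrum: Let M and M' be real symmetric positive-definite 2n×2n matrices with M ≤ M' (i.e. M' − M is positive semidefinite). Write the symplectic spectra in decreasing order, λ₁(M) ≥ … ≥ λ_n(M) and λ₁(M') ≥ … ≥ λ_n(M'). Then λ_j(M) ≤ λ_j(M') for every j = 1,…,n. -/
open Matrix Polynomial

section Aux

variable {m : Type*} [Fintype m] [DecidableEq m]

theorem charpoly_conj_of_mul_eq_one {R : Type*} [CommRing R] (A P Q : Matrix m m R)
    (h : P * Q = 1) : (P * A * Q).charpoly = A.charpoly := by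
  have h' : Q * P = 1 := mul_eq_one_comm.mp h
  have hPQ : (P.map C) * (Q.map C) = 1 := by
    rw [← Matrix.map_mul, h, Matrix.map_one _ (map_zero C) (map_one C)]
  have hQP : (Q.map C) * (P.map C) = 1 := mul_eq_one_comm.mp hPQ
  have hc : charmatrix (P * A * Q) = (P.map C) * charmatrix A * (Q.map C) := by
    rw [charmatrix, charmatrix, mul_sub, sub_mul]
    congr 1
    · rw [Matrix.mul_assoc, (Matrix.scalar_commute (X : R[X]) (Commute.all X) (Q.map C)).eq,
        ← Matrix.mul_assoc, hPQ, Matrix.one_mul]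
    · rw [RingHom.mapMatrix_apply, RingHom.mapMatrix_apply, Matrix.map_mul, Matrix.map_mul]
  rw [Matrix.charpoly, Matrix.charpoly, hc, det_mul, det_mul, mul_comm, ← mul_assoc,
    ← det_mul, hQP, det_one, one_mul]

theorem my_charpoly_diagonal {R : Type*} [CommRing R] (d : m → R) :
    (diagonal d).charpoly = ∏ i, (X - C (d i)) := by
  rw [Matrix.charpoly]
  have : charmatrix (diagonal d) = diagonal (fun i => (X : R[X]) - C (d i)) := by
    ext i j
    by_cases h : i = j
    · subst h; simp [charmatrix_apply_eq]
    · simp [charmatrix_apply_ne _ _ _ h, diagonal_apply_ne _ h]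
  rw [this, det_diagonal]

theorem my_eval_charpoly {R : Type*} [CommRing R] (A : Matrix m m R) (x : R) :
    A.charpoly.eval x = (x • (1 : Matrix m m R) - A).det := by
  rw [Matrix.charpoly, ← Polynomial.coe_evalRingHom, RingHom.map_det]
  congr 1
  ext i j
  by_cases h : i = j
  · subst h; simp [charmatrix_apply_eq, Matrix.smul_apply, Matrix.one_apply]
  · simp [charmatrix_apply_ne _ _ _ h, Matrix.smul_apply, Matrix.one_apply_ne h]

theorem charpoly_isHermitian {A : Matrix m m ℝ} (hA : A.IsHermitian) :
    A.charpoly = ∏ i, (X - C (hA.eigenvalues i)) := by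
  conv_lhs => rw [hA.spectral_theorem, Unitary.conjStarAlgAut_apply]
  rw [charpoly_conj_of_mul_eq_one _ _ _ (by
    simpa using (hA.eigenvectorUnitary.2.2 : _))]
  rw [show (RCLike.ofReal ∘ hA.eigenvalues : m → ℝ) = hA.eigenvalues by ext i; simp,
    my_charpoly_diagonal]

lemma dotProduct_sum' {ι : Type*} (u : m → ℝ) (s : Finset ι) (g : ι → m → ℝ) :
    u ⬝ᵥ (∑ i ∈ s, g i) = ∑ i ∈ s, u ⬝ᵥ g i := by
  simp only [dotProduct, Finset.sum_apply, Finset.mul_sum]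
  rw [Finset.sum_comm]

lemma sum_dotProduct' {ι : Type*} (s : Finset ι) (g : ι → m → ℝ) (u : m → ℝ) :
    (∑ i ∈ s, g i) ⬝ᵥ u = ∑ i ∈ s, g i ⬝ᵥ u := by
  simp only [dotProduct, Finset.sum_apply, Finset.sum_mul]
  rw [Finset.sum_comm]

lemma mulVec_sum' {ι : Type*} (A : Matrix m m ℝ) (s : Finset ι) (g : ι → m → ℝ) :
    A *ᵥ (∑ i ∈ s, g i) = ∑ i ∈ s, A *ᵥ g i := by
  simpa only [Matrix.mulVecLin_apply] using map_sum A.mulVecLin g s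

lemma dot_expand (A : Matrix m m ℝ) (μ : m → ℝ) (v : m → (m → ℝ))
    (hv : ∀ i j, v i ⬝ᵥ v j = if i = j then (1:ℝ) else 0)
    (hAv : ∀ i, A *ᵥ v i = μ i • v i)
    {ι : Type*} [Fintype ι] [DecidableEq ι] (f : ι → m) (hf : Function.Injective f)
    (c : ι → ℝ) :
    (∑ i, c i • v (f i)) ⬝ᵥ (A *ᵥ (∑ i, c i • v (f i))) = ∑ i, μ (f i) * c i ^ 2 ∧
    (∑ i, c i • v (f i)) ⬝ᵥ (∑ i, c i • v (f i)) = ∑ i, c i ^ 2 := by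
  have key : ∀ (w : ι → ℝ), (∑ i, c i • v (f i)) ⬝ᵥ (∑ j, w j • v (f j)) =
      ∑ i, c i * w i := by
    intro w
    rw [sum_dotProduct']
    refine Finset.sum_congr rfl fun i _ => ?_
    rw [smul_dotProduct, dotProduct_sum']
    have : ∀ j, (v (f i) ⬝ᵥ w j • v (f j)) = w j * (if i = j then (1:ℝ) else 0) := by
      intro j
      rw [dotProduct_smul, hv, smul_eq_mul]
      by_cases h : i = j
      · simp [h]
      · rw [if_neg (fun h' => h (hf h')), if_neg h, mul_zero]
    simp_rw [this, mul_ite, mul_one, mul_zero, Finset.sum_ite_eq (Finset.univ) i w,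
      Finset.mem_univ, if_pos, smul_eq_mul]
  constructor
  · have hAx : A *ᵥ (∑ i, c i • v (f i)) = ∑ j, (c j * μ (f j)) • v (f j) := by
      rw [mulVec_sum']
      refine Finset.sum_congr rfl fun j _ => ?_
      rw [Matrix.mulVec_smul, hAv, smul_smul]
    rw [hAx, key]
    refine Finset.sum_congr rfl fun i _ => ?_; ring
  · rw [key]
    refine Finset.sum_congr rfl fun i _ => ?_; ring

theorem eig_count_mono (A B : Matrix m m ℝ) (hA : A.IsHermitian) (hB : B.IsHermitian)
    (hAB : (B - A).PosSemidef) (t : ℝ) :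
    (Finset.univ.filter (fun i => t < hA.eigenvalues i)).card ≤
    (Finset.univ.filter (fun i => t < hB.eigenvalues i)).card := by
  by_contra hcon
  push_neg at hcon
  classical
  set vA : m → (m → ℝ) := fun i => ⇑(hA.eigenvectorBasis i) with hvA
  set vB : m → (m → ℝ) := fun i => ⇑(hB.eigenvectorBasis i) with hvB
  have onA : ∀ i j, vA i ⬝ᵥ vA j = if i = j then (1:ℝ) else 0 := by
    intro i j
    have := (orthonormal_iff_ite (𝕜 := ℝ)).mp hA.eigenvectorBasis.orthonormal i j
    simpa [PiLp.inner_apply, dotProduct, RCLike.inner_apply, mul_comm] using this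
  have onB : ∀ i j, vB i ⬝ᵥ vB j = if i = j then (1:ℝ) else 0 := by
    intro i j
    have := (orthonormal_iff_ite (𝕜 := ℝ)).mp hB.eigenvectorBasis.orthonormal i j
    simpa [PiLp.inner_apply, dotProduct, RCLike.inner_apply, mul_comm] using this
  set p : m → Prop := fun i => t < hA.eigenvalues i with hp
  set q : m → Prop := fun i => ¬ t < hB.eigenvalues i with hq
  let V : Submodule ℝ (EuclideanSpace ℝ m) :=
    Submodule.span ℝ (Set.range fun i : {i // p i} => hA.eigenvectorBasis i.1)
  let W : Submodule ℝ (EuclideanSpace ℝ m) :=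
    Submodule.span ℝ (Set.range fun i : {i // q i} => hB.eigenvectorBasis i.1)
  have liA : LinearIndependent ℝ (fun i : {i // p i} => hA.eigenvectorBasis i.1) :=
    hA.eigenvectorBasis.orthonormal.linearIndependent.comp _ Subtype.val_injective
  have liB : LinearIndependent ℝ (fun i : {i // q i} => hB.eigenvectorBasis i.1) :=
    hB.eigenvectorBasis.orthonormal.linearIndependent.comp _ Subtype.val_injective
  have hbig : Fintype.card m < Fintype.card {i // p i} + Fintype.card {i // q i} := by
    have e1 : Fintype.card {i // p i} =
        (Finset.univ.filter (fun i => t < hA.eigenvalues i)).card := Fintype.card_subtype _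
    have e2 : Fintype.card {i // q i} =
        (Finset.univ.filter (fun i => ¬ t < hB.eigenvalues i)).card := Fintype.card_subtype _
    have e3 := Finset.card_filter_add_card_filter_not
      (s := (Finset.univ : Finset m)) (p := fun i => t < hB.eigenvalues i)
    have e4 : (Finset.univ : Finset m).card = Fintype.card m := Finset.card_univ
    omega
  have htot : Module.finrank ℝ (EuclideanSpace ℝ m) = Fintype.card m :=
    finrank_euclideanSpace
  have hdimV : Module.finrank ℝ V = Fintype.card {i // p i} := finrank_span_eq_card liA
  have hdimW : Module.finrank ℝ W = Fintype.card {i // q i} := finrank_span_eq_card liB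
  have hVW : 0 < Module.finrank ℝ ↥(V ⊓ W) := by
    have hsum := Submodule.finrank_sup_add_finrank_inf_eq V W
    have hle : Module.finrank ℝ ↥(V ⊔ W) ≤ Module.finrank ℝ (EuclideanSpace ℝ m) :=
      Submodule.finrank_le _
    rw [hdimV, hdimW] at hsum
    rw [htot] at hle
    omega
  haveI : Nontrivial ↥(V ⊓ W) := Module.nontrivial_of_finrank_pos hVW
  obtain ⟨y, hy⟩ := exists_ne (0 : ↥(V ⊓ W))
  have hxV : (y : EuclideanSpace ℝ m) ∈ V := y.2.1
  have hxW : (y : EuclideanSpace ℝ m) ∈ W := y.2.2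
  have hxne : (y : EuclideanSpace ℝ m) ≠ 0 := fun h => hy (Subtype.ext h)
  set x : EuclideanSpace ℝ m := (y : EuclideanSpace ℝ m) with hxdef
  obtain ⟨c, hc⟩ := (Submodule.mem_span_range_iff_exists_fun ℝ).mp hxV
  obtain ⟨d, hd⟩ := (Submodule.mem_span_range_iff_exists_fun ℝ).mp hxW
  have hcx : (∑ i : {i // p i}, c i • vA i.1) = (x : m → ℝ) := by
    rw [← hc]; simp [hvA]
  have hdx : (∑ i : {i // q i}, d i • vB i.1) = (x : m → ℝ) := by
    rw [← hd]; simp [hvB]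
  have heA := dot_expand A hA.eigenvalues vA onA
    (fun i => hA.mulVec_eigenvectorBasis i) (Subtype.val : {i // p i} → m)
    Subtype.val_injective c
  have heB := dot_expand B hB.eigenvalues vB onB
    (fun i => hB.mulVec_eigenvectorBasis i) (Subtype.val : {i // q i} → m)
    Subtype.val_injective d
  rw [hcx] at heA
  rw [hdx] at heB
  have hex : ∃ i, c i ≠ 0 := by
    by_contra hall
    push_neg at hall
    apply hxne
    have : (∑ i : {i // p i}, c i • vA i.1) = 0 := by
      simp [hall]
    rw [hcx] at this
    simpa using congrArg (WithLp.toLp 2) this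
  obtain ⟨i₀, hi₀⟩ := hex
  have hstrict : t * ((x : m → ℝ) ⬝ᵥ (x : m → ℝ)) < (x : m → ℝ) ⬝ᵥ (A *ᵥ (x : m → ℝ)) := by
    rw [heA.1, heA.2, Finset.mul_sum]
    refine Finset.sum_lt_sum (fun i _ => ?_) ⟨i₀, Finset.mem_univ _, ?_⟩
    · exact mul_le_mul_of_nonneg_right (le_of_lt i.2) (sq_nonneg _)
    · exact mul_lt_mul_of_pos_right i₀.2
        (lt_of_le_of_ne (sq_nonneg _) (Ne.symm (pow_ne_zero 2 hi₀)))
  have hupper : (x : m → ℝ) ⬝ᵥ (B *ᵥ (x : m → ℝ)) ≤ t * ((x : m → ℝ) ⬝ᵥ (x : m → ℝ)) := by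
    rw [heB.1, heB.2, Finset.mul_sum]
    exact Finset.sum_le_sum (fun i _ =>
      mul_le_mul_of_nonneg_right (not_lt.mp i.2) (sq_nonneg _))
  have hpsd : (x : m → ℝ) ⬝ᵥ (A *ᵥ (x : m → ℝ)) ≤ (x : m → ℝ) ⬝ᵥ (B *ᵥ (x : m → ℝ)) := by
    have h0 := hAB.dotProduct_mulVec_nonneg (x : m → ℝ)
    rw [Matrix.sub_mulVec, dotProduct_sub] at h0
    simp only [star_trivial] at h0
    linarith
  linarith

theorem charpoly_neg_sq {n : ℕ} (A : Matrix m m ℝ) (l : Fin n → ℝ)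
    (h : A.charpoly = ∏ j, (X^2 + C (l j ^2))) :
    (-(A*A)).charpoly = ∏ j, (X - C (l j ^2))^2 := by
  apply Polynomial.eq_of_infinite_eval_eq
  refine Set.Infinite.mono (fun x hx => ?_) (Set.Ici_infinite (0:ℝ))
  have hx0 : (0:ℝ) ≤ x := hx
  set w : ℝ := Real.sqrt x with hwdef
  have hw : w^2 = x := Real.sq_sqrt hx0
  set Ac : Matrix m m ℂ := A.map Complex.ofRealHom with hAc
  have factor : ∀ (c : ℂ) (B : Matrix m m ℂ), (c•1 - B) * (c•1 + B) = (c^2)•1 - B*B := by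
    intro c B
    rw [sub_mul, mul_add, mul_add, smul_mul_assoc, smul_mul_assoc, one_mul, one_mul,
      mul_smul_comm, mul_one, smul_smul, ← pow_two]
    abel
  have hBB : (Complex.I • Ac) * (Complex.I • Ac) = -(Ac * Ac) := by
    rw [smul_mul_assoc, mul_smul_comm, smul_smul, Complex.I_mul_I, neg_smul, one_smul]
  have hfact : ((w:ℂ)•1 - Complex.I • Ac) * ((w:ℂ)•1 + Complex.I • Ac)
      = (x:ℂ)•(1 : Matrix m m ℂ) + Ac * Ac := by
    rw [factor, hBB, sub_neg_eq_add]
    congr 2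
    push_cast [← hw]
    ring
  have f1 : ((w:ℂ)•1 - Complex.I • Ac) = Complex.I • (((-Complex.I * w))•1 - Ac) := by
    rw [smul_sub, smul_smul]
    congr 2
    rw [show Complex.I * (-Complex.I * w) = (w:ℂ) by
      rw [← mul_assoc, mul_neg, Complex.I_mul_I, neg_neg, one_mul]]
  have f2 : ((w:ℂ)•1 + Complex.I • Ac) = (-Complex.I) • (((Complex.I * w))•1 - Ac) := by
    rw [smul_sub, smul_smul, neg_smul (Complex.I) Ac, sub_neg_eq_add]
    congr 2
    rw [show -Complex.I * (Complex.I * w) = (w:ℂ) by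
      rw [← mul_assoc, neg_mul, Complex.I_mul_I, neg_neg, one_mul]]
  have hcp : Ac.charpoly = ∏ j, (X^2 + C ((l j:ℂ) ^2)) := by
    rw [hAc, Matrix.charpoly_map, h, Polynomial.map_prod]
    refine Finset.prod_congr rfl fun j _ => ?_
    simp [Polynomial.map_add, Polynomial.map_pow]
  have hev : ∀ z : ℂ, ((z)•1 - Ac).det = ∏ j, (z^2 + (l j:ℂ)^2) := by
    intro z
    rw [← my_eval_charpoly, hcp]
    simp [Polynomial.eval_prod]
  have key : ((x:ℂ)•(1 : Matrix m m ℂ) + Ac * Ac).det = ∏ j, ((x:ℂ) - (l j:ℂ)^2)^2 := by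
    rw [← hfact, det_mul, f1, f2, Matrix.det_smul, Matrix.det_smul, hev, hev]
    have e1 : ∀ j, ((-Complex.I * w)^2 + (l j:ℂ)^2) = ((l j:ℂ)^2 - (x:ℂ)) := by
      intro j
      have : (-Complex.I * w)^2 = -((w:ℂ)^2) := by
        rw [mul_pow, neg_pow, Complex.I_sq]; ring
      rw [this]
      push_cast [← hw]; ring
    have e2 : ∀ j, ((Complex.I * w)^2 + (l j:ℂ)^2) = ((l j:ℂ)^2 - (x:ℂ)) := by
      intro j
      have : (Complex.I * w)^2 = -((w:ℂ)^2) := by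
        rw [mul_pow, Complex.I_sq]; ring
      rw [this]
      push_cast [← hw]; ring
    simp_rw [e1, e2]
    have hone : (Complex.I) ^ Fintype.card m * (-Complex.I) ^ Fintype.card m = 1 := by
      rw [← mul_pow, mul_neg, Complex.I_mul_I, neg_neg, one_pow]
    calc (Complex.I ^ Fintype.card m * ∏ j, ((l j:ℂ)^2 - (x:ℂ))) *
          ((-Complex.I) ^ Fintype.card m * ∏ j, ((l j:ℂ)^2 - (x:ℂ)))
        = ((Complex.I) ^ Fintype.card m * (-Complex.I) ^ Fintype.card m) *
          ((∏ j, ((l j:ℂ)^2 - (x:ℂ))) * ∏ j, ((l j:ℂ)^2 - (x:ℂ))) := by ring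
      _ = (∏ j, ((l j:ℂ)^2 - (x:ℂ))) * ∏ j, ((l j:ℂ)^2 - (x:ℂ)) := by rw [hone, one_mul]
      _ = ∏ j, ((x:ℂ) - (l j:ℂ)^2)^2 := by
          rw [← Finset.prod_mul_distrib]
          exact Finset.prod_congr rfl fun j _ => by ring
  have lhs : Complex.ofRealHom ((-(A*A)).charpoly.eval x)
      = ∏ j, ((x:ℂ) - (l j:ℂ)^2)^2 := by
    rw [my_eval_charpoly, sub_neg_eq_add, RingHom.map_det, ← key]
    congr 1
    ext i j
    simp [Matrix.mul_apply, Matrix.one_apply, Matrix.smul_apply, apply_ite, mul_ite,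
      Matrix.map_apply, hAc]
  have rhs : Complex.ofRealHom ((∏ j, ((X:ℝ[X]) - C (l j ^2))^2).eval x)
      = ∏ j, ((x:ℂ) - (l j:ℂ)^2)^2 := by
    push_cast [Polynomial.eval_prod]
    norm_num
  exact Complex.ofReal_injective (lhs.trans rhs.symm)

noncomputable def cnt (p : ℝ[X]) (t : ℝ) : ℕ :=
  Multiset.countP (fun μ => t < μ) p.roots

lemma roots_prod_X_sub_C' {ι : Type*} [Fintype ι] (a : ι → ℝ) :
    (∏ i, (X - C (a i))).roots = Multiset.map a Finset.univ.val := by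
  rw [Finset.prod_eq_multiset_prod]
  have : Multiset.map (fun i => X - C (a i)) Finset.univ.val
      = Multiset.map (fun r => X - C r) (Multiset.map a Finset.univ.val) := by
    rw [Multiset.map_map]; rfl
  rw [this, Polynomial.roots_multiset_prod_X_sub_C]

lemma card_filter_eq_countP {ι : Type*} [Fintype ι] (pred : ι → Prop) [DecidablePred pred] :
    (Finset.univ.filter pred).card = Multiset.countP pred Finset.univ.val := by
  rw [Multiset.countP_eq_card_filter]
  rfl

lemma cnt_eig (S : Matrix m m ℝ) (hS : S.IsHermitian) (t : ℝ) :
    (Finset.univ.filter fun i => t < hS.eigenvalues i).card = cnt S.charpoly t := by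
  rw [cnt, charpoly_isHermitian hS, roots_prod_X_sub_C', Multiset.countP_map,
    ← Multiset.countP_eq_card_filter, card_filter_eq_countP]

lemma cnt_prod_sq {k : ℕ} (a : Fin k → ℝ) (t : ℝ) :
    cnt (∏ j, (X - C (a j))^2) t = 2 * (Finset.univ.filter fun j => t < a j).card := by
  rw [cnt, show (∏ j, ((X:ℝ[X]) - C (a j))^2) = (∏ j, ((X:ℝ[X]) - C (a j)))^2 from
      Finset.prod_pow _ _ _, Polynomial.roots_pow, roots_prod_X_sub_C', two_nsmul,
    Multiset.countP_add, Multiset.countP_map, ← Multiset.countP_eq_card_filter,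
    card_filter_eq_countP, two_mul]

lemma charpoly_swap (A B : Matrix m m ℝ) (hA : IsUnit A.det) :
    (A * B).charpoly = (B * A).charpoly := by
  have h1 : A * (B * A) * A⁻¹ = (A * B) * (A * A⁻¹) := by noncomm_ring
  calc (A*B).charpoly = (A*(B*A)*A⁻¹).charpoly := by
        rw [h1, Matrix.mul_nonsing_inv _ hA, Matrix.mul_one]
    _ = (B*A).charpoly := charpoly_conj_of_mul_eq_one _ _ _ (Matrix.mul_nonsing_inv _ hA)

lemma charpoly_conj_sqrt (Cm Rm : Matrix m m ℝ) (hinv : Rm * Rm⁻¹ = 1) :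
    (Rm * Cm * Rm).charpoly = (Cm * (Rm * Rm)).charpoly := by
  have h1 : Rm * (Cm * (Rm * Rm)) * Rm⁻¹ = (Rm * Cm * Rm) * (Rm * Rm⁻¹) := by noncomm_ring
  calc (Rm * Cm * Rm).charpoly
      = (Rm * (Cm * (Rm * Rm)) * Rm⁻¹).charpoly := by rw [h1, hinv, Matrix.mul_one]
    _ = (Cm * (Rm * Rm)).charpoly := charpoly_conj_of_mul_eq_one _ _ _ hinv

end Aux

/-- Monotonicity of the symplectic spectrum: if `M ≤ M'` (i.e. `M' - M` is positive
semidefinite) and `lam`, `lam'` are the decreasingly ordered symplectic spectra of the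
symmetric positive-definite matrices `M`, `M'` (encoded by `charpoly (JM) = ∏ (X² + λ_j²)`),
then `λ_j(M) ≤ λ_j(M')` for every `j`. -/
theorem symplectic_spectrum_monotone (n : ℕ)
    (M M' : Matrix (Fin n ⊕ Fin n) (Fin n ⊕ Fin n) ℝ)
    (hM : M.PosDef) (hM' : M'.PosDef) (hle : (M' - M).PosSemidef)
    (lam lam' : Fin n → ℝ) (hpos : ∀ j, 0 < lam j) (hpos' : ∀ j, 0 < lam' j)
    (hdec : Antitone lam) (hdec' : Antitone lam')
    (hspec : (Jmat n * M).charpoly = ∏ j : Fin n, (X ^ 2 + C (lam j ^ 2)))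
    (hspec' : (Jmat n * M').charpoly = ∏ j : Fin n, (X ^ 2 + C (lam' j ^ 2))) :
    ∀ j, lam j ≤ lam' j := by
  classical
  intro j
  by_contra hj
  push_neg at hj
  have hconjT : ∀ (B : Matrix (Fin n ⊕ Fin n) (Fin n ⊕ Fin n) ℝ), Bᴴ = Bᵀ :=
    fun B => Matrix.ext fun i k => rfl
  have hJT : (Jmat n)ᵀ = - Jmat n := by
    rw [Jmat, Matrix.fromBlocks_transpose]
    simp [Matrix.fromBlocks_neg]
  have hJJ : Jmat n * Jmat n = -1 := by
    rw [Jmat, Matrix.fromBlocks_multiply]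
    simp [← Matrix.fromBlocks_one, Matrix.fromBlocks_neg]
  have hJJT : Jmat n * (Jmat n)ᵀ = 1 := by
    rw [hJT, Matrix.mul_neg, hJJ, neg_neg]
  have hdetJ : IsUnit (Jmat n).det :=
    IsUnit.of_mul_eq_one ((Jmat n)ᵀ).det (by rw [← det_mul, hJJT, det_one])
  -- square root of M
  have hMps := hM.posSemidef
  open scoped MatrixOrder in set R := CFC.sqrt M with hRdef
  have hRR : R * R = M := by open scoped MatrixOrder in exact CFC.sqrt_mul_sqrt_self M hMps.nonneg
  have hRH : Rᴴ = R := by open scoped MatrixOrder in exact (CFC.sqrt_nonneg M).posSemidef.1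
  have hRdet : IsUnit R.det := by
    have h2 : R.det * R.det = M.det := by rw [← det_mul, hRR]
    have h3 := hM.det_pos
    refine isUnit_iff_ne_zero.mpr fun h0 => ?_
    rw [h0, mul_zero] at h2
    linarith
  have hRinv : R * R⁻¹ = 1 := Matrix.mul_nonsing_inv _ hRdet
  -- the matrix N = J M' Jᵀ and its square root
  have hNps : (Jmat n * M' * (Jmat n)ᵀ).PosSemidef := by
    have := hM'.posSemidef.mul_mul_conjTranspose_same (Jmat n)
    rwa [hconjT] at this
  set Nn := Jmat n * M' * (Jmat n)ᵀ with hNdef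
  open scoped MatrixOrder in set R' := CFC.sqrt Nn with hR'def
  have hR'R' : R' * R' = Nn := by open scoped MatrixOrder in exact CFC.sqrt_mul_sqrt_self Nn hNps.nonneg
  have hR'H : R'ᴴ = R' := by open scoped MatrixOrder in exact (CFC.sqrt_nonneg Nn).posSemidef.1
  have hNdet : IsUnit Nn.det := by
    rw [hNdef, det_mul, det_mul]
    exact (hdetJ.mul (isUnit_iff_ne_zero.mpr hM'.det_pos.ne')).mul
      (by rwa [Matrix.det_transpose])
  have hR'det : IsUnit R'.det := by
    have h2 : R'.det * R'.det = Nn.det := by rw [← det_mul, hR'R']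
    exact isUnit_of_mul_isUnit_left (h2 ▸ hNdet)
  have hR'inv : R' * R'⁻¹ = 1 := Matrix.mul_nonsing_inv _ hR'det
  -- the four symmetric matrices
  set S0 := R * (Jmat n * M * (Jmat n)ᵀ) * R with hS0def
  set S1 := R * Nn * R with hS1def
  set S2 := R' * M * R' with hS2def
  set S3 := R' * M' * R' with hS3def
  have hJMJps : (Jmat n * M * (Jmat n)ᵀ).PosSemidef := by
    have := hM.posSemidef.mul_mul_conjTranspose_same (Jmat n)
    rwa [hconjT] at this
  have hS0ps : S0.PosSemidef := by
    have := hJMJps.mul_mul_conjTranspose_same R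
    rwa [hRH] at this
  have hS1ps : S1.PosSemidef := by
    have := hNps.mul_mul_conjTranspose_same R
    rwa [hRH] at this
  have hS2ps : S2.PosSemidef := by
    have := hM.posSemidef.mul_mul_conjTranspose_same R'
    rwa [hR'H] at this
  have hS3ps : S3.PosSemidef := by
    have := hM'.posSemidef.mul_mul_conjTranspose_same R'
    rwa [hR'H] at this
  -- charpoly computations
  have c0 : S0.charpoly = ∏ k, (X - C (lam k ^2))^2 := by
    rw [hS0def, charpoly_conj_sqrt _ _ hRinv, hRR]
    rw [show (Jmat n * M * (Jmat n)ᵀ) * M = -((Jmat n * M) * (Jmat n * M)) by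
      rw [hJT]; noncomm_ring]
    exact charpoly_neg_sq (Jmat n * M) lam hspec
  have c1 : S1.charpoly = (Nn * M).charpoly := by
    rw [hS1def, charpoly_conj_sqrt _ _ hRinv, hRR]
  have c2 : S2.charpoly = (Nn * M).charpoly := by
    rw [hS2def, charpoly_conj_sqrt _ _ hR'inv, hR'R']
    exact charpoly_swap M Nn (isUnit_iff_ne_zero.mpr hM.det_pos.ne')
  have c3 : S3.charpoly = ∏ k, (X - C (lam' k ^2))^2 := by
    rw [hS3def, charpoly_conj_sqrt _ _ hR'inv, hR'R',
      charpoly_swap M' Nn (isUnit_iff_ne_zero.mpr hM'.det_pos.ne')]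
    rw [show Nn * M' = -((Jmat n * M') * (Jmat n * M')) by
      rw [hNdef, hJT]; noncomm_ring]
    exact charpoly_neg_sq (Jmat n * M') lam' hspec'
  -- positive semidefinite differences
  have d01 : (S1 - S0).PosSemidef := by
    have h1 : (Jmat n * (M' - M) * (Jmat n)ᵀ).PosSemidef := by
      have := hle.mul_mul_conjTranspose_same (Jmat n)
      rwa [hconjT] at this
    have h2 := h1.mul_mul_conjTranspose_same R
    rw [hRH] at h2
    have h3 : R * (Jmat n * (M' - M) * (Jmat n)ᵀ) * R = S1 - S0 := by
      rw [hS1def, hS0def, hNdef]; noncomm_ring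
    rwa [h3] at h2
  have d23 : (S3 - S2).PosSemidef := by
    have h2 := hle.mul_mul_conjTranspose_same R'
    rw [hR'H] at h2
    have h3 : R' * (M' - M) * R' = S3 - S2 := by
      rw [hS3def, hS2def]; noncomm_ring
    rwa [h3] at h2
  -- the counting argument
  set t := lam' j ^ 2 with ht
  have chain : 2 * (Finset.univ.filter fun k => t < lam k ^2).card ≤
      2 * (Finset.univ.filter fun k => t < lam' k ^2).card := by
    calc 2 * (Finset.univ.filter fun k => t < lam k ^2).card
        = cnt S0.charpoly t := by rw [c0, cnt_prod_sq]
      _ = (Finset.univ.filter fun i => t < hS0ps.1.eigenvalues i).card :=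
          (cnt_eig S0 hS0ps.1 t).symm
      _ ≤ (Finset.univ.filter fun i => t < hS1ps.1.eigenvalues i).card :=
          eig_count_mono S0 S1 hS0ps.1 hS1ps.1 d01 t
      _ = cnt S1.charpoly t := cnt_eig S1 hS1ps.1 t
      _ = cnt S2.charpoly t := by rw [c1, c2]
      _ = (Finset.univ.filter fun i => t < hS2ps.1.eigenvalues i).card :=
          (cnt_eig S2 hS2ps.1 t).symm
      _ ≤ (Finset.univ.filter fun i => t < hS3ps.1.eigenvalues i).card :=
          eig_count_mono S2 S3 hS2ps.1 hS3ps.1 d23 t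
      _ = cnt S3.charpoly t := cnt_eig S3 hS3ps.1 t
      _ = 2 * (Finset.univ.filter fun k => t < lam' k ^2).card := by rw [c3, cnt_prod_sq]
  have hA1 : (j : ℕ) + 1 ≤ (Finset.univ.filter fun k => t < lam k ^2).card := by
    have hsub : Finset.Iic j ⊆ Finset.univ.filter (fun k => t < lam k ^2) := by
      intro k hk
      rw [Finset.mem_Iic] at hk
      rw [Finset.mem_filter]
      refine ⟨Finset.mem_univ _, ?_⟩
      have h1 : lam' j < lam k := lt_of_lt_of_le hj (hdec hk)
      exact pow_lt_pow_left₀ h1 (le_of_lt (hpos' j)) two_ne_zero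
    have := Finset.card_le_card hsub
    rwa [Fin.card_Iic] at this
  have hB1 : (Finset.univ.filter fun k => t < lam' k ^2).card ≤ (j : ℕ) := by
    have hsub : Finset.univ.filter (fun k => t < lam' k ^2) ⊆ Finset.Iio j := by
      intro k hk
      rw [Finset.mem_filter] at hk
      rw [Finset.mem_Iio]
      by_contra hkj
      push_neg at hkj
      have h1 : lam' k ≤ lam' j := hdec' hkj
      have h2 : lam' k ^2 ≤ lam' j ^2 := pow_le_pow_left₀ (le_of_lt (hpos' k)) h1 2
      exact absurd hk.2 (not_lt.mpr h2)
    have := Finset.card_le_card hsub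
    rwa [Fin.card_Iio] at this
  omega
end

section
/- Linear non-squeezing: Let S ∈ Sp(2n,ℝ) and let R, r > 0. If for every z ∈ ℝ²ⁿ with |z| ≤ R the image Sz lies in the symplectic cylinder Z₁(r) = {w ∈ ℝ²ⁿ : w₁² + w_{n+1}² ≤ r²}, then R ≤ r. -/
open Matrix

set_option maxHeartbeats 1000000 in
/-- Linear non-squeezing: if a symplectic matrix maps the closed Euclidean ball of radius `R`
into the symplectic cylinder `Z₁(r) = {w : w₁² + w_{n+1}² ≤ r²}` based on the conjugate
coordinate plane `(x₁,p₁)`, then `R ≤ r`. -/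
theorem linear_nonsqueezing (n : ℕ) (hn : 0 < n)
    (S : Matrix (Fin n ⊕ Fin n) (Fin n ⊕ Fin n) ℝ) (hS : IsSymplectic S)
    (R r : ℝ) (hR : 0 < R) (hr : 0 < r)
    (h : ∀ z : Fin n ⊕ Fin n → ℝ, Real.sqrt (∑ i, z i ^ 2) ≤ R →
      S.mulVec z (Sum.inl ⟨0, hn⟩) ^ 2 + S.mulVec z (Sum.inr ⟨0, hn⟩) ^ 2 ≤ r ^ 2) :
    R ≤ r := by
  -- S J Sᵀ = J
  have hS' : S * Jmat n * Sᵀ = Jmat n := by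
    have hJ : Jmat n = -(Matrix.J (Fin n) ℝ) := by
      simp [Jmat, Matrix.J, Matrix.fromBlocks_neg]
    have h1 : Sᵀ * Matrix.J (Fin n) ℝ * S = Matrix.J (Fin n) ℝ := by
      have := hS
      rw [IsSymplectic, hJ] at this
      simpa [Matrix.mul_neg, Matrix.neg_mul, neg_eq_iff_eq_neg] using this
    have h2 : S ∈ Matrix.symplecticGroup (Fin n) ℝ := (SymplecticGroup.mem_iff').mpr h1
    have h3 := (SymplecticGroup.mem_iff).mp h2
    rw [hJ, Matrix.mul_neg, Matrix.neg_mul, h3]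
  set e0 : Fin n := ⟨0, hn⟩
  set u : Fin n ⊕ Fin n → ℝ := fun i => S (Sum.inl e0) i with hu
  set v : Fin n ⊕ Fin n → ℝ := fun i => S (Sum.inr e0) i with hv
  set w : Fin n ⊕ Fin n → ℝ := fun j => ∑ i, u i * Jmat n i j with hw
  -- the symplectic product of the first two rows is 1
  have hω : ∑ j, w j * v j = 1 := by
    have := congrFun (congrFun hS' (Sum.inl e0)) (Sum.inr e0)
    rw [Matrix.mul_apply] at this
    simp only [Matrix.mul_apply, Matrix.transpose_apply] at this
    have hJval : Jmat n (Sum.inl e0) (Sum.inr e0) = 1 := by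
      simp [Jmat, Matrix.one_apply]
    rw [hJval] at this
    simpa [hw, hu, hv, Finset.sum_mul] using this
  -- w is u with coordinates swapped/negated
  have hw_inl : ∀ k : Fin n, w (Sum.inl k) = -u (Sum.inr k) := by
    intro k
    simp [hw, Jmat, Fintype.sum_sum_type, Matrix.one_apply, mul_ite]
  have hw_inr : ∀ k : Fin n, w (Sum.inr k) = u (Sum.inl k) := by
    intro k
    simp [hw, Jmat, Fintype.sum_sum_type, Matrix.one_apply, mul_ite]
  have hwu : ∑ j, w j ^ 2 = ∑ j, u j ^ 2 := by
    rw [Fintype.sum_sum_type, Fintype.sum_sum_type]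
    have h1 : ∀ k : Fin n, w (Sum.inl k) ^ 2 = u (Sum.inr k) ^ 2 := fun k => by
      rw [hw_inl]; ring
    have h2 : ∀ k : Fin n, w (Sum.inr k) ^ 2 = u (Sum.inl k) ^ 2 := fun k => by
      rw [hw_inr]
    simp_rw [h1, h2]
    exact add_comm _ _
  -- Cauchy–Schwarz
  have hCS : (1 : ℝ) ≤ (∑ j, u j ^ 2) * ∑ j, v j ^ 2 := by
    have := Finset.sum_mul_sq_le_sq_mul_sq Finset.univ w v
    rw [hω, hwu] at this
    simpa using this
  set A : ℝ := Real.sqrt (∑ j, u j ^ 2) with hA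
  set B : ℝ := Real.sqrt (∑ j, v j ^ 2) with hB
  have hA2 : A ^ 2 = ∑ j, u j ^ 2 := Real.sq_sqrt (by positivity)
  have hB2 : B ^ 2 = ∑ j, v j ^ 2 := Real.sq_sqrt (by positivity)
  have hApos : 0 < A := by
    rcases lt_or_ge 0 A with h' | h'
    · exact h'
    · exfalso
      have : A = 0 := le_antisymm h' (Real.sqrt_nonneg _)
      have h0 : (∑ j, u j ^ 2) = 0 := by rw [← hA2, this]; ring
      rw [h0, zero_mul] at hCS; linarith
  have hBpos : 0 < B := by
    rcases lt_or_ge 0 B with h' | h'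
    · exact h'
    · exfalso
      have : B = 0 := le_antisymm h' (Real.sqrt_nonneg _)
      have h0 : (∑ j, v j ^ 2) = 0 := by rw [← hB2, this]; ring
      rw [h0, mul_zero] at hCS; linarith
  -- test vectors along the two rows
  have key : ∀ (a : Fin n ⊕ Fin n), (a = Sum.inl e0 ∨ a = Sum.inr e0) →
      ∀ (N : ℝ), 0 < N → N ^ 2 = ∑ j, (S a j) ^ 2 → R * N ≤ r := by
    intro a ha N hN hN2
    set z : Fin n ⊕ Fin n → ℝ := fun j => (R / N) * S a j with hz
    have hz2 : ∑ j, z j ^ 2 = R ^ 2 := by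
      simp only [hz, mul_pow, ← Finset.mul_sum, ← hN2]
      field_simp
    have hzR : Real.sqrt (∑ j, z j ^ 2) ≤ R := by
      rw [hz2, Real.sqrt_sq hR.le]
    have hmv : S.mulVec z a = R * N := by
      simp only [Matrix.mulVec, dotProduct, hz]
      have h2 : ∑ j, S a j * (R / N * S a j) = (R / N) * ∑ j, (S a j) ^ 2 := by
        rw [Finset.mul_sum]; congr 1; ext j; ring
      rw [h2, ← hN2]
      field_simp
    have hb := h z hzR
    have h1 : S.mulVec z a ^ 2 ≤ r ^ 2 := by
      rcases ha with rfl | rfl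
      · nlinarith [sq_nonneg (S.mulVec z (Sum.inr e0))]
      · nlinarith [sq_nonneg (S.mulVec z (Sum.inl e0))]
    rw [hmv] at h1
    nlinarith [mul_pos hR hN]
  have hRA : R * A ≤ r := key (Sum.inl e0) (Or.inl rfl) A hApos (by rw [hA2])
  have hRB : R * B ≤ r := key (Sum.inr e0) (Or.inr rfl) B hBpos (by rw [hB2])
  -- combine: 1 ≤ A*B so R² ≤ R²AB = (RA)(RB) ≤ r²
  have hCS' : 1 ≤ (A * B) ^ 2 := by
    rw [mul_pow, hA2, hB2]; exact hCS
  have hAB : 1 ≤ A * B := by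
    nlinarith [mul_pos hApos hBpos]
  nlinarith [mul_pos hApos hBpos, mul_nonneg (mul_pos hR hApos).le (mul_pos hR hBpos).le]
end
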